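/- arXiv:2408.03933 — 7 statements merged into one kernel-verified Lean document; each statement's English description precedes it below -/
import Mathlib

section
/- The directed graph D_int is acyclic: there exists a function from the vertices of D_int to the natural numbers that strictly increases along every directed edge (equivalently, D_int contains no directed cycle). -/
/-- A directed path (self-avoiding walk) from `s` to `t` in the digraph with
edge relation `E`, given as the list of its vertices in order. -/
structure IsPathList {V : Type*} (E : V → V → Prop) (s t : V) (p : List V) : Prop where
  chain : p.Chain' E
  nodup : p.Nodup
  head : p.head? = some s
  last : p.getLast? = some t

/-- A shortest directed `s⇝t` path, where the length of a path is its number of vertices. -/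
def IsShortestDirPath {V : Type*} (E : V → V → Prop) (s t : V) (p : List V) : Prop :=
  IsPathList E s t p ∧ ∀ q : List V, IsPathList E s t q → p.length ≤ q.length

/-- Symmetrization of a relation: the adjacency of the undirected graph obtained by
forgetting the orientation of the edges. -/
def UAdj {V : Type*} (E : V → V → Prop) (x y : V) : Prop := E x y ∨ E y x

/-- The cost of a path: the sum of the costs of its vertices. -/
def pathCost {V : Type*} (cost : V → ℕ) (p : List V) : ℕ := (p.map cost).sum

/-- A shortest (minimum-cost) `s`–`t` path in the undirected graph obtained from `E`. -/
def IsShortestCostPath {V : Type*} (E : V → V → Prop) (cost : V → ℕ) (s t : V)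
    (p : List V) : Prop :=
  IsPathList (UAdj E) s t p ∧
    ∀ q : List V, IsPathList (UAdj E) s t q → pathCost cost p ≤ pathCost cost q

/-- The (directed) edges traversed by a path, as ordered pairs of consecutive vertices. -/
def dirEdges {V : Type*} (p : List V) : List (V × V) := p.zip p.tail

/-- Two directed paths are edge-disjoint. -/
def EdgeDisj {V : Type*} (p q : List V) : Prop := ∀ e ∈ dirEdges p, e ∉ dirEdges q

/-- The (undirected) edges traversed by a path, as unordered pairs. -/
def uEdges {V : Type*} (p : List V) : List (Sym2 V) := (dirEdges p).map fun e => s(e.1, e.2)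

/-- Two undirected paths are edge-disjoint. -/
def UEdgeDisj {V : Type*} (p q : List V) : Prop := ∀ e ∈ uEdges p, e ∉ uEdges q

/-- Two paths are vertex-disjoint. -/
def VertDisj {V : Type*} (p q : List V) : Prop := ∀ v ∈ p, v ∉ q

/-- The vertices of the intermediate graph `D_int` (also the vertex set of `U_int`):
grid vertices `w_{i,j}^{q,ℓ}` (`grid i j q ℓ`, with `q` the column and `ℓ` the row,
indices `0`-based) and terminal vertices `a i`, `b i`, `c j`, `d j`. -/
inductive DIntV (k N : ℕ) where
  | grid (i j : Fin k) (q ℓ : Fin N)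
  | a (i : Fin k)
  | b (i : Fin k)
  | c (j : Fin k)
  | d (j : Fin k)
  deriving DecidableEq, Fintype

/-- The directed edges of `D_int`. -/
inductive DIntE (k N : ℕ) : DIntV k N → DIntV k N → Prop where
  /-- `w_{i,j}^{q,ℓ} → w_{i,j}^{q,ℓ+1}` for `ℓ < N` -/
  | up (i j : Fin k) (q ℓ ℓ' : Fin N) (h : (ℓ' : ℕ) = (ℓ : ℕ) + 1) :
      DIntE k N (.grid i j q ℓ) (.grid i j q ℓ')
  /-- `w_{i,j}^{q,ℓ} → w_{i,j}^{q+1,ℓ}` for `q < N` -/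
  | right (i j : Fin k) (q q' ℓ : Fin N) (h : (q' : ℕ) = (q : ℕ) + 1) :
      DIntE k N (.grid i j q ℓ) (.grid i j q' ℓ)
  /-- `w_{i,j}^{N,ℓ} → w_{i+1,j}^{1,ℓ}` for `i < k` -/
  | hmatch (i i' j : Fin k) (q q' ℓ : Fin N)
      (hi : (i' : ℕ) = (i : ℕ) + 1) (hq : (q : ℕ) + 1 = N) (hq' : (q' : ℕ) = 0) :
      DIntE k N (.grid i j q ℓ) (.grid i' j q' ℓ)
  /-- `w_{i,j}^{ℓ,N} → w_{i,j+1}^{ℓ,1}` for `j < k` -/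
  | vmatch (i j j' : Fin k) (q ℓ ℓ' : Fin N)
      (hj : (j' : ℕ) = (j : ℕ) + 1) (hl : (ℓ : ℕ) + 1 = N) (hl' : (ℓ' : ℕ) = 0) :
      DIntE k N (.grid i j q ℓ) (.grid i j' q ℓ')
  /-- `a_i → w_{i,1}^{q,1}` for all `q ∈ [N]` -/
  | srcA (i j : Fin k) (q ℓ : Fin N) (hj : (j : ℕ) = 0) (hl : (ℓ : ℕ) = 0) :
      DIntE k N (.a i) (.grid i j q ℓ)
  /-- `w_{i,k}^{q,N} → b_i` for all `q ∈ [N]` -/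
  | snkB (i j : Fin k) (q ℓ : Fin N) (hj : (j : ℕ) + 1 = k) (hl : (ℓ : ℕ) + 1 = N) :
      DIntE k N (.grid i j q ℓ) (.b i)
  /-- `c_j → w_{1,j}^{1,ℓ}` for all `ℓ ∈ [N]` -/
  | srcC (i j : Fin k) (q ℓ : Fin N) (hi : (i : ℕ) = 0) (hq : (q : ℕ) = 0) :
      DIntE k N (.c j) (.grid i j q ℓ)
  /-- `w_{k,j}^{N,ℓ} → d_j` for all `ℓ ∈ [N]` -/
  | snkD (i j : Fin k) (q ℓ : Fin N) (hi : (i : ℕ) + 1 = k) (hq : (q : ℕ) + 1 = N) :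
      DIntE k N (.grid i j q ℓ) (.d j)

/-- The horizontal canonical path `Canonical(r; c_j ⇝ d_j)`, as the list of its
vertices : `c_j`, then row `r` of the grids `D_{1,j}, …, D_{k,j}` from left to right,
then `d_j`. -/
def canonH (k N : ℕ) (j : Fin k) (r : Fin N) : List (DIntV k N) :=
  DIntV.c j ::
    (((List.finRange k).flatMap fun i =>
        (List.finRange N).map fun q => DIntV.grid i j q r) ++ [DIntV.d j])

/-- The vertical canonical path `Canonical(r; a_i ⇝ b_i)`, as the list of its
vertices : `a_i`, then column `r` of the grids `D_{i,1}, …, D_{i,k}` from bottom to top,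
then `b_i`. -/
def canonV (k N : ℕ) (i : Fin k) (r : Fin N) : List (DIntV k N) :=
  DIntV.a i ::
    (((List.finRange k).flatMap fun j =>
        (List.finRange N).map fun ℓ => DIntV.grid i j r ℓ) ++ [DIntV.b i])

/-!
Place the grid vertex `w_{i,j}^{q,ℓ}` at the point `(iN + q, jN + ℓ)` of one big `kN × kN` grid.
Every grid edge of `D_int`, including the matching edges between consecutive blocks, raises the
sum of the two coordinates by exactly one. Ranking a grid vertex by that sum plus one, the sources
`a_i`, `c_j` by `0` and the sinks `b_i`, `d_j` by `2kN` gives a function that increases along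
every edge.
-/

theorem Nat.mul_add_lt_mul {i k q N : ℕ} (hi : i < k) (hq : q < N) : i * N + q < k * N :=
  calc i * N + q < (i + 1) * N := by rw [add_one_mul]; omega
    _ ≤ k * N := Nat.mul_le_mul_right N hi

theorem Nat.mul_add_add_one_eq_mul {i i' q N : ℕ} (hi : i' = i + 1) (hq : q + 1 = N) :
    i * N + q + 1 = i' * N := by
  rw [hi, add_one_mul, ← hq]; omega

namespace DIntV

variable {k N : ℕ}

def globalIndex (i : Fin k) (q : Fin N) : ℕ := i * N + q

theorem globalIndex_lt (i : Fin k) (q : Fin N) : globalIndex i q < k * N :=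
  Nat.mul_add_lt_mul i.isLt q.isLt

def rank : DIntV k N → ℕ
  | grid i j q ℓ => globalIndex i q + globalIndex j ℓ + 1
  | a _ | c _ => 0
  | b _ | d _ => 2 * k * N

theorem rank_lt_rank_of_dIntE {u v : DIntV k N} (h : DIntE k N u v) : rank u < rank v := by
  cases h with
  | up | right => simp only [rank, globalIndex]; omega
  | hmatch _ _ _ _ _ _ hi hq =>
    have := Nat.mul_add_add_one_eq_mul hi hq
    simp only [rank, globalIndex]; omega
  | vmatch _ _ _ _ _ _ hj hl =>
    have := Nat.mul_add_add_one_eq_mul hj hl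
    simp only [rank, globalIndex]; omega
  | srcA | srcC => simp only [rank]; omega
  | snkB i j q ℓ | snkD i j q ℓ =>
    have := globalIndex_lt i q
    have := globalIndex_lt j ℓ
    simp only [rank]; linarith

end DIntV

theorem DInt_acyclic_general (N k : ℕ) :
    ∃ f : DIntV k N → ℕ, ∀ u v : DIntV k N, DIntE k N u v → f u < f v :=
  ⟨DIntV.rank, fun _ _ => DIntV.rank_lt_rank_of_dIntE⟩

/-- `D_int` is acyclic: there is a function from its vertices to ℕ that
strictly increases along every directed edge. -/
theorem DInt_acyclic (N k : ℕ) (hN : 1 ≤ N) (hk : 1 ≤ k) :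
    ∃ f : DIntV k N → ℕ, ∀ u v : DIntV k N, DIntE k N u v → f u < f v :=
  DInt_acyclic_general N k
end

section
/- For every j ∈ [k], every directed path from c_j to d_j in D_int uses only vertices of Horizontal_int(j) = {c_j, d_j} ∪ { w_{i,j}^{q,ℓ} : i ∈ [k], q,ℓ ∈ [N] }. -/
/-- The vertex set `Horizontal_int(j) = {c_j, d_j} ∪ {w_{i,j}^{q,ℓ} : i ∈ [k], q,ℓ ∈ [N]}`. -/
def HorizontalSet (k N : ℕ) (j : Fin k) : Set (DIntV k N) :=
  {v | v = DIntV.c j ∨ v = DIntV.d j ∨ ∃ (i : Fin k) (q ℓ : Fin N), v = DIntV.grid i j q ℓ}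


/-! Edges of `D_int` never decrease the grid index `j`, so along a `c_j ⇝ d_j` path it is
squeezed between its values `j` at both ends. Placing every `a_i` below and every `b_i`
above all values of `j` keeps this monotone on the terminals and rules them out. -/

theorem List.IsChain.apply_mem_Icc {α β : Type*} [Preorder β]
    {E : α → α → Prop} (f : α → β) (hf : ∀ ⦃x y⦄, E x y → f x ≤ f y)
    {l : List α} (hl : l.IsChain E) {s t : α} (hs : l.head? = some s)
    (ht : l.getLast? = some t) {v : α} (hv : v ∈ l) : f v ∈ Set.Icc (f s) (f t) := by
  refine ⟨hl.induction (fun x => f s ≤ f x) l (fun _ _ hxy h => h.trans (hf hxy)) ?_ v hv,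
    hl.backwards_induction (fun x => f x ≤ f t) l (fun _ _ hxy h => (hf hxy).trans h) ?_ v hv⟩
  · intro hne
    rw [Option.some_inj.mp ((List.head?_eq_some_head hne).symm.trans hs)]
  · intro hne
    rw [Option.some_inj.mp ((List.getLast?_eq_some_getLast hne).symm.trans ht)]

namespace DIntV

variable {k N : ℕ}

def jLevel : DIntV k N → ℕ
  | .grid _ j _ _ => j + 1
  | .a _ => 0
  | .b _ => k + 1
  | .c j => j + 1
  | .d j => j + 1

theorem mem_horizontalSet_of_jLevel_eq {j : Fin k} {v : DIntV k N}
    (hv : v.jLevel = (j : ℕ) + 1) : v ∈ HorizontalSet k N j := by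
  cases v with
  | grid i j' q ℓ => exact .inr <| .inr ⟨i, q, ℓ, by simp_all [jLevel, Fin.ext_iff]⟩
  | a _ => simp [jLevel] at hv
  | b _ => simp only [jLevel] at hv; omega
  | c _ => exact .inl <| by simp_all [jLevel, Fin.ext_iff]
  | d _ => exact .inr <| .inl <| by simp_all [jLevel, Fin.ext_iff]

end DIntV

theorem DIntE.jLevel_le {k N : ℕ} {x y : DIntV k N} (h : DIntE k N x y) :
    x.jLevel ≤ y.jLevel := by
  cases h <;> simp only [DIntV.jLevel] <;> omega

theorem DInt_cd_paths_horizontal_general (N k : ℕ) (j : Fin k)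
    (p : List (DIntV k N)) (hp : IsPathList (DIntE k N) (DIntV.c j) (DIntV.d j) p) :
    ∀ v ∈ p, v ∈ HorizontalSet k N j := by
  intro v hv
  obtain ⟨hcv, hvd⟩ :=
    hp.chain.apply_mem_Icc DIntV.jLevel (fun _ _ => DIntE.jLevel_le) hp.head hp.last hv
  exact DIntV.mem_horizontalSet_of_jLevel_eq (le_antisymm hvd hcv)

/-- every directed path from `c_j` to `d_j` in `D_int` uses only vertices
of `Horizontal_int(j)`. -/
theorem DInt_cd_paths_horizontal (N k : ℕ) (hN : 1 ≤ N) (hk : 1 ≤ k) (j : Fin k)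
    (p : List (DIntV k N)) (hp : IsPathList (DIntE k N) (DIntV.c j) (DIntV.d j) p) :
    ∀ v ∈ p, v ∈ HorizontalSet k N j :=
  DInt_cd_paths_horizontal_general N k j p hp
end

section
/- For every j ∈ [k] and every r ∈ [N], the horizontal canonical path Canonical(r; c_j⇝d_j) has exactly kN + 2 vertices, every directed path from c_j to d_j in D_int has at least kN + 2 vertices, and hence Canonical(r; c_j⇝d_j) is a shortest c_j⇝d_j path in D_int. -/
/-!
Give every vertex of `D_int` a potential that no edge raises by more than one: a grid vertex
`w_{i,j}^{q,ℓ}` gets its horizontal position `(i - 1) N + q`, `c_j` gets `0` and `d_j` gets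
`kN + 1`. Any `c_j ⇝ d_j` path therefore has at least `kN + 2` vertices. Along
`Canonical(r; c_j ⇝ d_j)` the potential rises by exactly one at each step, so it is a path (the
rise also rules out repeated vertices) with exactly `kN + 2` vertices.
-/

theorem List.isChain_finRange_succ (n : ℕ) :
    (List.finRange n).IsChain fun a b : Fin n => (b : ℕ) = a + 1 := by
  refine (List.isChain_map Fin.val (R := fun a b => b = a + 1)).1 ?_
  rw [List.map_coe_finRange_eq_range, List.isChain_range]
  exact fun _ _ => rfl

theorem List.head?_finRange {n : ℕ} (hn : 0 < n) : (List.finRange n).head? = some ⟨0, hn⟩ := by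
  simp [List.head?_eq_getElem?, hn]

theorem List.getLast?_finRange {n : ℕ} (hn : 0 < n) :
    (List.finRange n).getLast? = some ⟨n - 1, by omega⟩ := by
  simp [List.getLast?_eq_getElem?, hn]

section Potential

variable {V : Type*} {E : V → V → Prop} (φ : V → ℕ)

theorem List.IsChain.nodup_of_potential_lt {p : List V}
    (hp : p.IsChain fun x y => φ x < φ y) : p.Nodup :=
  (((List.isChain_map φ).2 hp).pairwise.nodup).of_map φ

theorem List.IsChain.potential_add_one_le (hφ : ∀ x y, E x y → φ y ≤ φ x + 1) :
    ∀ {p : List V} {s t : V}, p.IsChain E → p.head? = some s → p.getLast? = some t →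
      φ t + 1 ≤ φ s + p.length
  | [], _, _, _, hs, _ => by simp at hs
  | [x], s, t, _, hs, ht => by simp_all
  | x :: y :: p, s, t, hp, hs, ht => by
    rw [List.isChain_cons_cons] at hp
    have hxy := hφ x y hp.1
    have ih := hp.2.potential_add_one_le hφ rfl (by simpa using ht)
    obtain rfl : x = s := by simpa using hs
    simp only [List.length_cons] at ih ⊢
    omega

end Potential

namespace DIntV

variable {k N : ℕ}

/-- `a_i` and `b_i` lie on no `c_j ⇝ d_j` path; their values only keep every edge within `+1`. -/
def hPot : DIntV k N → ℕ
  | .grid i _ q _ => i * N + q + 1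
  | .a _ => k * N
  | .b _ => 0
  | .c _ => 0
  | .d _ => k * N + 1

def gridRow (i j : Fin k) (r : Fin N) : List (DIntV k N) :=
  (List.finRange N).map fun q => grid i j q r

end DIntV

theorem DIntE.hPot_le {k N : ℕ} {x y : DIntV k N} (h : DIntE k N x y) :
    y.hPot ≤ x.hPot + 1 := by
  cases h with
  | up | vmatch | snkB => simp [DIntV.hPot]
  | right _ _ _ _ _ h => simp only [DIntV.hPot]; omega
  | hmatch i i' _ q _ _ hi hq => simp only [DIntV.hPot, hi, Nat.succ_mul]; omega
  | srcA i _ q =>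
    have := Nat.mul_le_mul_right N (Nat.succ_le_of_lt i.isLt)
    simp only [DIntV.hPot, Nat.succ_mul] at this ⊢
    omega
  | srcC _ _ _ _ hi hq => simp [DIntV.hPot, hi, hq]
  | snkD i _ q _ hi hq => simp only [DIntV.hPot, ← hi, Nat.succ_mul]; omega

namespace DIntV

variable {k N : ℕ} (i j : Fin k) (r : Fin N)

theorem head?_gridRow : (gridRow i j r).head? = some (grid i j ⟨0, r.pos⟩ r) := by
  simp [gridRow, List.head?_eq_getElem?, r.pos]

theorem getLast?_gridRow :
    (gridRow i j r).getLast? = some (grid i j ⟨N - 1, by have := r.pos; omega⟩ r) := by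
  simp [gridRow, List.getLast?_eq_getElem?, r.pos]

theorem gridRow_isChain :
    (gridRow i j r).IsChain fun x y => DIntE k N x y ∧ x.hPot < y.hPot := by
  refine (List.isChain_map _).2 ((List.isChain_finRange_succ N).imp fun q q' h => ?_)
  exact ⟨.right _ _ _ _ _ h, by simp only [hPot]; omega⟩

theorem canonH_eq_flatten : canonH k N j r =
    ([c j] :: ((List.finRange k).map (gridRow · j r) ++ [[d j]])).flatten := by
  simp [canonH, gridRow, List.flatMap]

theorem canonH_isChain :
    (canonH k N j r).IsChain fun x y => DIntE k N x y ∧ x.hPot < y.hPot := by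
  have hk : 0 < k := j.pos
  have hN : 0 < N := r.pos
  rw [canonH_eq_flatten, List.isChain_flatten (by simp [gridRow, hN.ne'])]
  refine ⟨?_, ?_⟩
  · simp only [List.mem_cons, List.mem_append, List.mem_map, List.not_mem_nil, or_false]
    rintro l (rfl | ⟨i, -, rfl⟩ | rfl)
    exacts [.singleton _, gridRow_isChain i j r, .singleton _]
  rw [List.isChain_cons, List.isChain_append]
  refine ⟨?enter, ?rows, by simp, ?exit⟩
  case enter =>
    rw [List.head?_append_of_ne_nil _ (by simp [hk.ne']), List.head?_map, List.head?_finRange hk]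
    simp only [Option.map_some, Option.mem_def, Option.some.injEq, forall_eq', head?_gridRow,
      List.getLast?_singleton]
    exact ⟨.srcC _ _ _ _ rfl rfl, by simp [hPot]⟩
  case rows =>
    refine (List.isChain_map _).2 ((List.isChain_finRange_succ k).imp fun i i' h => ?_)
    simp only [getLast?_gridRow, head?_gridRow, Option.mem_def, Option.some.injEq]
    rintro _ rfl _ rfl
    exact ⟨.hmatch _ _ _ _ _ _ h (Nat.sub_add_cancel hN) rfl,
      by simp only [hPot, h, add_mul]; omega⟩
  case exit =>
    rw [List.getLast?_map, List.getLast?_finRange hk]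
    simp only [Option.map_some, Option.mem_def, Option.some.injEq, forall_eq', getLast?_gridRow,
      List.head?_cons]
    refine ⟨.snkD _ _ _ _ (by simp; omega) (by simp; omega), ?_⟩
    have := Nat.le_mul_of_pos_left N hk
    simp only [hPot, Nat.sub_one_mul]
    omega

theorem length_canonH : (canonH k N j r).length = k * N + 2 := by
  simp [canonH]

theorem canonH_isPathList : IsPathList (DIntE k N) (c j) (d j) (canonH k N j r) :=
  have hchain := canonH_isChain j r
  { chain := hchain.imp fun _ _ => And.left
    nodup := (hchain.imp fun _ _ => And.right).nodup_of_potential_lt hPot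
    head := rfl
    last := by rw [canonH, ← List.cons_append, List.getLast?_concat] }

end DIntV

theorem DInt_canonH_shortest_general (N k : ℕ) (j : Fin k) (r : Fin N) :
    (canonH k N j r).length = k * N + 2 ∧
    (∀ p : List (DIntV k N),
      IsPathList (DIntE k N) (DIntV.c j) (DIntV.d j) p → k * N + 2 ≤ p.length) ∧
    IsShortestDirPath (DIntE k N) (DIntV.c j) (DIntV.d j) (canonH k N j r) := by
  have hlower (p : List (DIntV k N)) (hp : IsPathList (DIntE k N) (.c j) (.d j) p) :
      k * N + 2 ≤ p.length := by
    have := hp.chain.potential_add_one_le DIntV.hPot (fun _ _ => DIntE.hPot_le) hp.head hp.last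
    simpa only [DIntV.hPot, zero_add] using this
  exact ⟨DIntV.length_canonH j r, hlower, DIntV.canonH_isPathList j r,
    fun q hq => DIntV.length_canonH j r ▸ hlower q hq⟩

/-- for every `j ∈ [k]` and `r ∈ [N]`, the horizontal canonical path
`Canonical(r; c_j⇝d_j)` has exactly `kN + 2` vertices, every directed `c_j⇝d_j` path in
`D_int` has at least `kN + 2` vertices, and hence `Canonical(r; c_j⇝d_j)` is a shortest
`c_j⇝d_j` path in `D_int`. -/
theorem DInt_canonH_shortest (N k : ℕ) (hN : 1 ≤ N) (hk : 1 ≤ k) (j : Fin k) (r : Fin N) :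
    (canonH k N j r).length = k * N + 2 ∧
    (∀ p : List (DIntV k N),
      IsPathList (DIntE k N) (DIntV.c j) (DIntV.d j) p → k * N + 2 ≤ p.length) ∧
    IsShortestDirPath (DIntE k N) (DIntV.c j) (DIntV.d j) (canonH k N j r) :=
  DInt_canonH_shortest_general N k j r
end

section
/- For every j ∈ [k], every shortest directed path from c_j to d_j in D_int equals the horizontal canonical path Canonical(ℓ; c_j⇝d_j) for some ℓ ∈ [N]. -/
namespace List

variable {α : Type*} {R : α → α → Prop}

theorem IsChain.eq_of_head?_eq_of_length_eq :
    ∀ {l₁ l₂ : List α}, l₁.IsChain R → l₂.IsChain R → l₁.head? = l₂.head? →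
      l₁.length = l₂.length → (∀ x ∈ l₁, ∀ y z, R x y → R x z → y = z) → l₁ = l₂
  | [], [], _, _, _, _, _ => rfl
  | [_], [_], _, _, hhead, _, _ => by simpa using hhead
  | x :: y :: l₁, x' :: z :: l₂, h₁, h₂, hhead, hlen, huniq => by
    obtain rfl : x = x' := by simpa using hhead
    rw [isChain_cons_cons] at h₁ h₂
    obtain rfl := huniq x mem_cons_self y z h₁.1 h₂.1
    rw [eq_of_head?_eq_of_length_eq h₁.2 h₂.2 rfl (by simpa using hlen)
      fun w hw => huniq w (mem_cons_of_mem x hw)]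

variable {f : α → ℕ}

theorem IsChain.potential_le (hR : ∀ ⦃x y⦄, R x y → f y ≤ f x + 1) :
    ∀ {l : List α} {s t : α}, l.IsChain R → l.head? = some s → l.getLast? = some t →
      f t + 1 ≤ f s + l.length
  | [_], _, _, _, hs, ht => by simp_all
  | x :: y :: l, s, t, h, hs, ht => by
    rw [isChain_cons_cons] at h
    obtain rfl : x = s := by simpa using hs
    have := h.2.potential_le hR rfl (by simpa using ht)
    have := hR h.1
    simp only [length_cons] at *
    omega

theorem IsChain.tight_of_potential_eq (hR : ∀ ⦃x y⦄, R x y → f y ≤ f x + 1) :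
    ∀ {l : List α} {s t : α}, l.IsChain R → l.head? = some s → l.getLast? = some t →
      f t + 1 = f s + l.length → l.IsChain fun x y => R x y ∧ f y = f x + 1
  | [_], _, _, _, _, _, _ => .singleton _
  | x :: y :: l, s, t, h, hs, ht, heq => by
    rw [isChain_cons_cons] at h
    obtain rfl : x = s := by simpa using hs
    have ht' : (y :: l).getLast? = some t := by simpa using ht
    have := h.2.potential_le hR rfl ht'
    have := hR h.1
    simp only [length_cons] at *
    exact .cons_cons ⟨h.1, by omega⟩
      (h.2.tight_of_potential_eq hR rfl ht' (by simp only [length_cons]; omega))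

theorem IsChain.pairwise_lt_of_tight {l : List α}
    (h : l.IsChain fun x y => R x y ∧ f y = f x + 1) :
    l.Pairwise fun x y => f x < f y :=
  pairwise_map.1 ((isChain_map f).2 (h.imp fun _ _ hxy => by omega)).pairwise

end List

def DIntV.hpos {k N : ℕ} : DIntV k N → ℕ
  | .grid i _ q _ => i * N + q + 1
  | .a _ => k * N -- just large enough for the edges out of `a_i`
  | .b _ => 0
  | .c _ => 0
  | .d _ => k * N + 1

section

variable {k N : ℕ}

lemma DIntV.hpos_grid_le (i j : Fin k) (q ℓ : Fin N) : (DIntV.grid i j q ℓ).hpos ≤ k * N := by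
  have : (i + 1) * N ≤ k * N := Nat.mul_le_mul_right N i.isLt
  simp only [DIntV.hpos, Nat.succ_mul] at *
  omega

lemma DIntE.hpos_le ⦃x y : DIntV k N⦄ (h : DIntE k N x y) : y.hpos ≤ x.hpos + 1 := by
  cases h with
  | srcA i j q ℓ => exact (DIntV.hpos_grid_le i j q ℓ).trans (Nat.le_succ _)
  | hmatch i i' j q q' ℓ hi hq hq' => simp only [DIntV.hpos, hi, hq', Nat.succ_mul]; omega
  | snkD i j q ℓ hi hq => simp only [DIntV.hpos, ← hi, Nat.succ_mul]; omega
  | srcC i j q ℓ hi hq => simp [DIntV.hpos, hi, hq]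
  | _ => simp only [DIntV.hpos]; omega

lemma DIntE.eq_of_hpos_eq_succ {x y z : DIntV k N} (hx : 0 < x.hpos) (hy : DIntE k N x y)
    (hz : DIntE k N x z) (hy' : y.hpos = x.hpos + 1) (hz' : z.hpos = x.hpos + 1) : y = z := by
  rcases x with ⟨i, j, q, ℓ⟩ | i | i | j | j
  · cases hy <;> cases hz <;> grind [DIntV.hpos]
  · cases hy
    exact absurd hy' (by grind [DIntV.hpos_grid_le, DIntV.hpos])
  · cases hy
  · simp [DIntV.hpos] at hx
  · cases hy

def canonHGrid (j : Fin k) (r : Fin N) (m : Fin (k * N)) : DIntV k N :=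
  .grid m.divNat j m.modNat r

lemma canonH_eq_ofFn (j : Fin k) (r : Fin N) :
    canonH k N j r = .c j :: (List.ofFn (canonHGrid j r) ++ [.d j]) := by
  rw [canonH, List.ofFn_mul, List.flatMap_def, ← List.ofFn_eq_map]
  congr 3
  rw [List.ofFn_inj]
  funext i
  rw [← List.ofFn_eq_map, List.ofFn_inj]
  funext q
  simp only [canonHGrid]
  congr 1 <;> ext
  · simp only [Fin.coe_divNat]
    rw [Nat.add_comm, Nat.add_mul_div_right _ _ q.pos, Nat.div_eq_of_lt q.isLt, Nat.zero_add]
  · simp [Fin.coe_modNat, Nat.mod_eq_of_lt q.isLt]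

lemma length_canonH (j : Fin k) (r : Fin N) : (canonH k N j r).length = k * N + 2 := by
  simp [canonH_eq_ofFn]

lemma DIntE.canonHGrid_succ (j : Fin k) (r : Fin N) {m m' : Fin (k * N)}
    (h : (m' : ℕ) = m + 1) : DIntE k N (canonHGrid j r m) (canonHGrid j r m') := by
  have hN : 0 < N := Nat.pos_of_mul_pos_left m.pos
  have hm := Nat.div_add_mod (m : ℕ) N
  have hmN := Nat.mod_lt (m : ℕ) hN
  unfold canonHGrid
  by_cases hq : (m : ℕ) % N + 1 < N
  · obtain ⟨hdiv, hmod⟩ := (Nat.div_mod_unique hN).2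
      (⟨by omega, hq⟩ : (m : ℕ) % N + 1 + N * (m / N) = m' ∧ _)
    rw [show m'.divNat = m.divNat from Fin.ext (by simp [Fin.coe_divNat, hdiv])]
    exact .right _ _ _ _ _ (by simp [Fin.coe_modNat, hmod])
  · obtain ⟨hdiv, hmod⟩ := (Nat.div_mod_unique hN).2
      (⟨by rw [Nat.mul_succ]; omega, hN⟩ : 0 + N * (m / N + 1) = m' ∧ _)
    exact .hmatch _ _ _ _ _ _ (by simp [Fin.coe_divNat, hdiv])
      (by simp [Fin.coe_modNat]; omega) (by simp [Fin.coe_modNat, hmod])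

lemma isChain_canonH (j : Fin k) (r : Fin N) : (canonH k N j r).IsChain (DIntE k N) := by
  have hk := j.pos
  have hN := r.pos
  have hkN : 0 < k * N := Nat.mul_pos hk hN
  rw [canonH_eq_ofFn, List.isChain_cons, List.isChain_append, List.isChain_ofFn]
  refine ⟨?_, fun m hm => DIntE.canonHGrid_succ j r rfl, .singleton _, ?_⟩
  · simp only [List.head?_eq_getElem?]
    simp [hkN]
    exact .srcC _ _ _ _ (by simp [Fin.coe_divNat]) (by simp [Fin.coe_modNat])
  · simp only [List.getLast?_eq_getElem?]
    simp [hkN]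
    have := Nat.le_mul_of_pos_right N hk
    have := Nat.mul_comm N k
    obtain ⟨hdiv, hmod⟩ := (Nat.div_mod_unique hN).2
      (⟨by rw [Nat.mul_sub_one]; omega, Nat.sub_lt hN one_pos⟩ :
        N - 1 + N * (k - 1) = k * N - 1 ∧ _)
    exact .snkD _ _ _ _ (by simp [Fin.coe_divNat, hdiv]; omega)
      (by simp [Fin.coe_modNat, hmod]; omega)

lemma isChain_tight_canonH (j : Fin k) (r : Fin N) :
    (canonH k N j r).IsChain fun x y => DIntE k N x y ∧ y.hpos = x.hpos + 1 :=
  (isChain_canonH j r).tight_of_potential_eq DIntE.hpos_le (s := .c j) (t := .d j)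
    (by simp [canonH]) (by simp [canonH, List.getLast?_cons])
    (by simp [length_canonH, DIntV.hpos])

lemma isPathList_canonH (j : Fin k) (r : Fin N) :
    IsPathList (DIntE k N) (.c j) (.d j) (canonH k N j r) where
  chain := isChain_canonH j r
  nodup := (isChain_tight_canonH j r).pairwise_lt_of_tight.imp fun h => ne_of_apply_ne _ h.ne
  head := by simp [canonH]
  last := by simp [canonH, List.getLast?_cons]

lemma DIntE.exists_canonH_getElem_one {j : Fin k} {y : DIntV k N} (h : DIntE k N (.c j) y) :
    ∃ r, (canonH k N j r)[1]? = some y := by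
  cases h with
  | srcC i j q ℓ hi hq =>
    have hkN : 0 < (List.ofFn (canonHGrid j ℓ)).length := by
      rw [List.length_ofFn]; exact Nat.mul_pos i.pos q.pos
    refine ⟨ℓ, ?_⟩
    rw [canonH_eq_ofFn, List.getElem?_cons_succ, List.getElem?_append_left hkN,
      List.getElem?_ofFn]
    simp [canonHGrid, Fin.ext_iff, hi, hq, i.pos, q.pos]

end

theorem DInt_shortest_is_canonH_general (N k : ℕ) (j : Fin k)
    (p : List (DIntV k N))
    (hp : IsShortestDirPath (DIntE k N) (DIntV.c j) (DIntV.d j) p) :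
    ∃ ℓ : Fin N, p = canonH k N j ℓ := by
  obtain ⟨hpath, hmin⟩ := hp
  obtain ⟨y, rest, rfl⟩ : ∃ y rest, p = .c j :: y :: rest := by
    match p, hpath.head, hpath.last with
    | [_], rfl, h => simp at h
    | _ :: y :: rest, h, _ => exact ⟨y, rest, by simpa using h⟩
  have hchain : (DIntV.c j :: y :: rest).IsChain (DIntE k N) := hpath.chain
  obtain ⟨ℓ, hℓ⟩ := DIntE.exists_canonH_getElem_one (List.isChain_cons_cons.1 hchain).1
  have hlen : rest.length = k * N := by
    have hup := hmin _ (isPathList_canonH j ℓ)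
    have hlow := hchain.potential_le DIntE.hpos_le hpath.head hpath.last
    simp only [List.length_cons, length_canonH, DIntV.hpos] at hup hlow
    omega
  have htight := hchain.tight_of_potential_eq DIntE.hpos_le hpath.head hpath.last
    (by simp [DIntV.hpos, hlen])
  have hpos : ∀ x ∈ y :: rest, 0 < x.hpos :=
    (List.pairwise_cons.1 htight.pairwise_lt_of_tight).1
  have htail : y :: rest = (canonH k N j ℓ).tail :=
    htight.tail.eq_of_head?_eq_of_length_eq (isChain_tight_canonH j ℓ).tail
      (by rw [List.head?_tail (l := canonH k N j ℓ), hℓ]; rfl) (by simp [length_canonH, hlen])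
      fun x hx _ _ hy hz => DIntE.eq_of_hpos_eq_succ (hpos x hx) hy.1 hz.1 hy.2 hz.2
  exact ⟨ℓ, by rw [htail]; rfl⟩

/-- every shortest directed path from `c_j` to `d_j` in `D_int` equals the
horizontal canonical path `Canonical(ℓ; c_j⇝d_j)` for some `ℓ ∈ [N]`. -/
theorem DInt_shortest_is_canonH (N k : ℕ) (hN : 1 ≤ N) (hk : 1 ≤ k) (j : Fin k)
    (p : List (DIntV k N))
    (hp : IsShortestDirPath (DIntE k N) (DIntV.c j) (DIntV.d j) p) :
    ∃ ℓ : Fin N, p = canonH k N j ℓ :=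
  DInt_shortest_is_canonH_general N k j p hp
end

section
/- For every i ∈ [k]: (i) for each r ∈ [N] the vertical canonical path Canonical(r; a_i⇝b_i) is a shortest a_i⇝b_i path in D_int, with exactly kN + 2 vertices; and (ii) every shortest directed path from a_i to b_i in D_int equals Canonical(ℓ; a_i⇝b_i) for some ℓ ∈ [N]. -/
/-!
The potential `φ(w_{i,j}^{q,ℓ}) = (j - 1)N + ℓ`, `φ(a_i) = 0`, `φ(b_i) = kN + 1` grows by at
most one along every edge, so every `a_i ⇝ b_i` path has at least `kN + 2` vertices, and the
canonical paths have exactly that many. On a path of that length every edge is tight, i.e. raises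
`φ` by exactly one. The tight edge leaving a grid vertex is unique (one step up the same column,
or on to the next grid, or to `b_i`), so such a path is determined by its first edge
`a_i → w_{i,1}^{r,1}` and is `Canonical(r; a_i ⇝ b_i)`.
-/

theorem List.isChain_finRange {n : ℕ} {R : Fin n → Fin n → Prop} :
    (finRange n).IsChain R ↔
      ∀ (i) (hi : i + 1 < n), R ⟨i, Nat.lt_of_succ_lt hi⟩ ⟨i + 1, hi⟩ := by
  rw [← ofFn_id, isChain_ofFn]
  rfl

@[simp]
theorem List.head?_finRange_succ (n : ℕ) : (finRange (n + 1)).head? = some 0 := by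
  simp [finRange_succ]

@[simp]
theorem List.getLast?_finRange_succ (n : ℕ) :
    (finRange (n + 1)).getLast? = some (Fin.last n) := by
  simp [finRange_succ_last]

theorem List.IsChain.eq_of_rel_unique {V : Type*} {R : V → V → Prop}
    (hR : ∀ w x y y', R w x → R x y → R x y' → y = y') :
    ∀ {w x : V} {l l' : List V}, (w :: x :: l).IsChain R → (w :: x :: l').IsChain R →
      l.length = l'.length → l = l'
  | _, _, [], [], _, _, _ => rfl
  | _, _, _ :: _, _ :: _, h, h', hlen => by
    obtain rfl := hR _ _ _ _ (isChain_cons_cons.1 h).1 (isChain_cons_cons.1 h.tail).1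
      (isChain_cons_cons.1 h'.tail).1
    rw [eq_of_rel_unique hR h.tail h'.tail (by simpa using hlen)]

def TightEdge {V : Type*} (E : V → V → Prop) (φ : V → ℕ) (x y : V) : Prop :=
  E x y ∧ φ y = φ x + 1

section Potential

variable {V : Type*} {E : V → V → Prop} {φ : V → ℕ}

theorem List.IsChain.potential_le_s5 (hφ : ∀ ⦃x y⦄, E x y → φ y ≤ φ x + 1) :
    ∀ {l : List V} {s t : V}, l.IsChain E → l.head? = some s → l.getLast? = some t →
      φ t + 1 ≤ φ s + l.length
  | [_], _, _, _, hs, ht => by simp_all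
  | x :: y :: l, s, t, h, hs, ht => by
    obtain rfl : x = s := by simpa using hs
    obtain ⟨hxy, htail⟩ := isChain_cons_cons.1 h
    have := hφ hxy
    have := htail.potential_le_s5 hφ rfl (by simpa using ht)
    simp only [length_cons] at this ⊢
    omega

theorem List.IsChain.tightEdge_of_potential_eq (hφ : ∀ ⦃x y⦄, E x y → φ y ≤ φ x + 1) :
    ∀ {l : List V} {s t : V}, l.IsChain E → l.head? = some s → l.getLast? = some t →
      φ t + 1 = φ s + l.length → l.IsChain (TightEdge E φ)
  | [_], _, _, _, _, _, _ => .singleton _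
  | x :: y :: l, s, t, h, hs, ht, heq => by
    obtain rfl : x = s := by simpa using hs
    have ht' : (y :: l).getLast? = some t := by simpa using ht
    obtain ⟨hxy, htail⟩ := isChain_cons_cons.1 h
    have := hφ hxy
    have := htail.potential_le_s5 hφ rfl ht'
    simp only [length_cons] at heq this
    exact .cons_cons ⟨hxy, by omega⟩
      (htail.tightEdge_of_potential_eq hφ rfl ht' (by simp only [length_cons]; omega))

theorem List.IsChain.nodup_of_tightEdge {l : List V} (h : l.IsChain (TightEdge E φ)) : l.Nodup :=
  have hlt : (l.map φ).IsChain (· < ·) :=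
    (isChain_map φ).2 <| h.imp fun _ _ hxy => by rw [hxy.2]; exact Nat.lt_succ_self _
  Nodup.of_map φ (hlt.pairwise.imp ne_of_lt)

end Potential

variable {k N : ℕ}

namespace DIntV

/-- The values on `c` and `d` only serve to make every edge raise the potential by at most one. -/
def potential : DIntV k N → ℕ
  | grid _ j _ ℓ => j * N + ℓ + 1
  | a _ => 0
  | b _ => k * N + 1
  | c _ => k * N
  | d _ => 0

end DIntV

theorem DIntE.potential_le_s5 {x y : DIntV k N} (h : DIntE k N x y) :
    y.potential ≤ x.potential + 1 := by
  cases h with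
  | vmatch _ _ _ _ _ _ hj hl hl' =>
    simp only [DIntV.potential, hj, hl', add_mul]
    omega
  | snkB _ j _ _ hj hl =>
    simp only [DIntV.potential, ← hj, add_mul]
    omega
  | srcC _ j =>
    have : ((j : ℕ) + 1) * N ≤ k * N := Nat.mul_le_mul_right N j.isLt
    simp only [DIntV.potential, add_mul] at this ⊢
    omega
  | _ => simp_all [DIntV.potential] <;> omega

theorem DIntE.tightEdge_unique {w x y y' : DIntV k N} (hw : DIntE k N w x)
    (hy : TightEdge (DIntE k N) DIntV.potential x y)
    (hy' : TightEdge (DIntE k N) DIntV.potential x y') : y = y' := by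
  obtain ⟨hy, hφy⟩ := hy
  obtain ⟨hy', hφy'⟩ := hy'
  cases hy <;> cases hy' <;> simp_all [DIntV.potential, Fin.ext_iff] <;> first | omega | cases hw

theorem length_canonV (i : Fin k) (r : Fin N) : (canonV k N i r).length = k * N + 2 := by
  simp [canonV, List.sum_replicate]

theorem getLast?_canonV (i : Fin k) (r : Fin N) : (canonV k N i r).getLast? = some (.b i) := by
  simp [canonV, List.getLast?_cons]

theorem canonV_eq_cons_cons (i : Fin k) (r : Fin N) :
    ∃ l, canonV k N i r = .a i :: .grid i ⟨0, i.pos⟩ r ⟨0, r.pos⟩ :: l := by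
  obtain ⟨k, rfl⟩ := Nat.exists_eq_add_one_of_ne_zero i.pos.ne'
  obtain ⟨N, rfl⟩ := Nat.exists_eq_add_one_of_ne_zero r.pos.ne'
  simp [canonV, List.finRange_succ]

theorem isChain_canonV (i : Fin k) (r : Fin N) : (canonV k N i r).IsChain (DIntE k N) := by
  obtain ⟨k, rfl⟩ := Nat.exists_eq_add_one_of_ne_zero i.pos.ne'
  obtain ⟨N, rfl⟩ := Nat.exists_eq_add_one_of_ne_zero r.pos.ne'
  have hcolumn (j : Fin (k + 1)) :
      ((List.finRange (N + 1)).map (DIntV.grid i j r)).IsChain (DIntE (k + 1) (N + 1)) :=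
    (List.isChain_map _).2 <| List.isChain_finRange.2 fun ℓ _ => .up _ _ _ _ _ rfl
  rw [canonV, List.isChain_cons, List.isChain_append, List.flatMap_def,
    List.isChain_flatten (by simp)]
  refine ⟨?_, ⟨⟨by simpa using hcolumn, ?_⟩, .singleton _, ?_⟩⟩
  · simpa [List.finRange_succ] using .srcA _ _ _ _ rfl rfl
  · refine (List.isChain_map _).2 <| List.isChain_finRange.2 fun j _ => ?_
    simpa using .vmatch _ _ _ _ _ _ rfl rfl rfl
  · simpa [List.finRange_succ_last, List.getLast?_append] using .snkB _ _ _ _ rfl rfl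

theorem isChain_tightEdge_of_length_eq {i : Fin k} {p : List (DIntV k N)}
    (hc : p.IsChain (DIntE k N)) (hs : p.head? = some (.a i)) (ht : p.getLast? = some (.b i))
    (hlen : p.length = k * N + 2) : p.IsChain (TightEdge (DIntE k N) DIntV.potential) :=
  hc.tightEdge_of_potential_eq (fun _ _ h => h.potential_le_s5) hs ht
    (by simp [DIntV.potential, hlen])

theorem isPathList_canonV (i : Fin k) (r : Fin N) :
    IsPathList (DIntE k N) (.a i) (.b i) (canonV k N i r) where
  chain := isChain_canonV i r
  nodup := (isChain_tightEdge_of_length_eq (isChain_canonV i r) rfl (getLast?_canonV i r)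
    (length_canonV i r)).nodup_of_tightEdge
  head := rfl
  last := getLast?_canonV i r

theorem IsPathList.le_length {i : Fin k} {p : List (DIntV k N)}
    (hp : IsPathList (DIntE k N) (.a i) (.b i) p) : k * N + 2 ≤ p.length := by
  have := hp.chain.potential_le_s5 (fun _ _ h => h.potential_le_s5) hp.head hp.last
  simp only [DIntV.potential] at this
  omega

theorem isShortestDirPath_canonV (i : Fin k) (r : Fin N) :
    IsShortestDirPath (DIntE k N) (.a i) (.b i) (canonV k N i r) :=
  ⟨isPathList_canonV i r, fun _ hq => (length_canonV i r).trans_le hq.le_length⟩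

theorem IsPathList.eq_cons_cons {i : Fin k} {p : List (DIntV k N)}
    (hp : IsPathList (DIntE k N) (.a i) (.b i) p) :
    ∃ (r : Fin N) (l : List _), p = .a i :: .grid i ⟨0, i.pos⟩ r ⟨0, r.pos⟩ :: l := by
  obtain ⟨_ | ⟨y, l⟩, rfl⟩ : ∃ l, p = .a i :: l := by
    have := hp.head
    cases p <;> simp_all
  · simpa using hp.last
  obtain ⟨hy, -⟩ := List.isChain_cons_cons.1 hp.chain
  cases hy with
  | srcA _ j q ℓ hj hl => exact ⟨q, l, by simp [Fin.ext_iff, hj, hl]⟩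

theorem IsShortestDirPath.eq_canonV {i : Fin k} {p : List (DIntV k N)}
    (hp : IsShortestDirPath (DIntE k N) (.a i) (.b i) p) : ∃ r, p = canonV k N i r := by
  obtain ⟨hpath, hmin⟩ := hp
  obtain ⟨r, l, hpl⟩ := hpath.eq_cons_cons
  obtain ⟨l', hl'⟩ := canonV_eq_cons_cons i r
  have hlen : p.length = k * N + 2 :=
    le_antisymm (length_canonV i r ▸ hmin _ (isPathList_canonV i r)) hpath.le_length
  have htight := hpl ▸ isChain_tightEdge_of_length_eq hpath.chain hpath.head hpath.last hlen
  have hcanon := hl' ▸ isChain_tightEdge_of_length_eq (isChain_canonV i r) rfl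
    (getLast?_canonV i r) (length_canonV i r)
  have hl : l = l' := List.IsChain.eq_of_rel_unique (R := TightEdge (DIntE k N) DIntV.potential)
    (fun _ _ _ _ hw => DIntE.tightEdge_unique hw.1) htight hcanon
    (by have := length_canonV i r; simp_all)
  exact ⟨r, by rw [hpl, hl', hl]⟩

theorem DInt_canonV_shortest_general (N k : ℕ) (i : Fin k) :
    (∀ r : Fin N,
      IsShortestDirPath (DIntE k N) (DIntV.a i) (DIntV.b i) (canonV k N i r) ∧
      (canonV k N i r).length = k * N + 2) ∧
    (∀ p : List (DIntV k N),
      IsShortestDirPath (DIntE k N) (DIntV.a i) (DIntV.b i) p →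
      ∃ ℓ : Fin N, p = canonV k N i ℓ) :=
  ⟨fun r => ⟨isShortestDirPath_canonV i r, length_canonV i r⟩, fun _ hp => hp.eq_canonV⟩

/-- for every `i ∈ [k]`: (i) for each `r ∈ [N]` the vertical canonical path
`Canonical(r; a_i⇝b_i)` is a shortest `a_i⇝b_i` path in `D_int`, with exactly `kN + 2`
vertices; and (ii) every shortest directed `a_i⇝b_i` path in `D_int` equals
`Canonical(ℓ; a_i⇝b_i)` for some `ℓ ∈ [N]`. -/
theorem DInt_canonV_shortest (N k : ℕ) (hN : 1 ≤ N) (hk : 1 ≤ k) (i : Fin k) :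
    (∀ r : Fin N,
      IsShortestDirPath (DIntE k N) (DIntV.a i) (DIntV.b i) (canonV k N i r) ∧
      (canonV k N i r).length = k * N + 2) ∧
    (∀ p : List (DIntV k N),
      IsShortestDirPath (DIntE k N) (DIntV.a i) (DIntV.b i) p →
      ∃ ℓ : Fin N, p = canonV k N i ℓ) :=
  DInt_canonV_shortest_general N k i
end

section
/- Let 0 < ε ≤ 1/2. If there exists a collection P of pairwise edge-disjoint directed paths in D_edge such that for at least (1/2 + ε)·2k of the 2k terminal pairs (s,t) ∈ T the collection P contains a shortest s⇝t path, then G contains a clique of size at least 2εk. -/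
/-- `(q,ℓ) ∈ S_{i,j}`: for `i = j` this means `q = ℓ` and for `i ≠ j` it means that
`v_q v_ℓ` is an edge of `G`. -/
def Split {k N : ℕ} (G : SimpleGraph (Fin N)) (i j : Fin k) (q ℓ : Fin N) : Prop :=
  (i = j ∧ q = ℓ) ∨ (i ≠ j ∧ G.Adj q ℓ)

instance {k N : ℕ} (G : SimpleGraph (Fin N)) [DecidableRel G.Adj]
    (i j : Fin k) (q ℓ : Fin N) : Decidable (Split G i j q ℓ) := by
  unfold Split; infer_instance

/-- The tags of the copies into which a grid vertex of `D_int` is split in `D_edge`. -/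
inductive ETag where
  | LB | Mid | Hor | Ver | TR
  deriving DecidableEq

/-- The vertices of the graph `D_edge` (also the vertex set of `U_edge`): each grid
vertex `w_{i,j}^{q,ℓ}` of `D_int` gives rise to copies `w_LB, w_Mid, w_Hor, w_Ver, w_TR`
(of which only `{LB, Mid, TR}`, respectively `{LB, Hor, Ver, TR}`, carry edges,
according to whether `w` is one-split or two-split), plus the terminal vertices. -/
inductive DEdgeV (k N : ℕ) where
  | grid (i j : Fin k) (q ℓ : Fin N) (t : ETag)
  | a (i : Fin k)
  | b (i : Fin k)
  | c (j : Fin k)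
  | d (j : Fin k)
  deriving DecidableEq

/-- The directed edges of `D_edge`. -/
inductive DEdgeE (k N : ℕ) (G : SimpleGraph (Fin N)) : DEdgeV k N → DEdgeV k N → Prop where
  /-- one-split: `w_LB → w_Mid` -/
  | mid1 (i j : Fin k) (q ℓ : Fin N) (h : ¬ Split G i j q ℓ) :
      DEdgeE k N G (.grid i j q ℓ .LB) (.grid i j q ℓ .Mid)
  /-- one-split: `w_Mid → w_TR` -/
  | mid2 (i j : Fin k) (q ℓ : Fin N) (h : ¬ Split G i j q ℓ) :
      DEdgeE k N G (.grid i j q ℓ .Mid) (.grid i j q ℓ .TR)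
  /-- two-split: `w_LB → w_Hor` -/
  | hor1 (i j : Fin k) (q ℓ : Fin N) (h : Split G i j q ℓ) :
      DEdgeE k N G (.grid i j q ℓ .LB) (.grid i j q ℓ .Hor)
  /-- two-split: `w_Hor → w_TR` -/
  | hor2 (i j : Fin k) (q ℓ : Fin N) (h : Split G i j q ℓ) :
      DEdgeE k N G (.grid i j q ℓ .Hor) (.grid i j q ℓ .TR)
  /-- two-split: `w_LB → w_Ver` -/
  | ver1 (i j : Fin k) (q ℓ : Fin N) (h : Split G i j q ℓ) :
      DEdgeE k N G (.grid i j q ℓ .LB) (.grid i j q ℓ .Ver)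
  /-- two-split: `w_Ver → w_TR` -/
  | ver2 (i j : Fin k) (q ℓ : Fin N) (h : Split G i j q ℓ) :
      DEdgeE k N G (.grid i j q ℓ .Ver) (.grid i j q ℓ .TR)
  /-- former edge `w_{i,j}^{q,ℓ} → w_{i,j}^{q,ℓ+1}` -/
  | up (i j : Fin k) (q ℓ ℓ' : Fin N) (h : (ℓ' : ℕ) = (ℓ : ℕ) + 1) :
      DEdgeE k N G (.grid i j q ℓ .TR) (.grid i j q ℓ' .LB)
  /-- former edge `w_{i,j}^{q,ℓ} → w_{i,j}^{q+1,ℓ}` -/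
  | right (i j : Fin k) (q q' ℓ : Fin N) (h : (q' : ℕ) = (q : ℕ) + 1) :
      DEdgeE k N G (.grid i j q ℓ .TR) (.grid i j q' ℓ .LB)
  /-- former edge `w_{i,j}^{N,ℓ} → w_{i+1,j}^{1,ℓ}` -/
  | hmatch (i i' j : Fin k) (q q' ℓ : Fin N)
      (hi : (i' : ℕ) = (i : ℕ) + 1) (hq : (q : ℕ) + 1 = N) (hq' : (q' : ℕ) = 0) :
      DEdgeE k N G (.grid i j q ℓ .TR) (.grid i' j q' ℓ .LB)
  /-- former edge `w_{i,j}^{ℓ,N} → w_{i,j+1}^{ℓ,1}` -/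
  | vmatch (i j j' : Fin k) (q ℓ ℓ' : Fin N)
      (hj : (j' : ℕ) = (j : ℕ) + 1) (hl : (ℓ : ℕ) + 1 = N) (hl' : (ℓ' : ℕ) = 0) :
      DEdgeE k N G (.grid i j q ℓ .TR) (.grid i j' q ℓ' .LB)
  /-- former edge `a_i → w_{i,1}^{q,1}` -/
  | srcA (i j : Fin k) (q ℓ : Fin N) (hj : (j : ℕ) = 0) (hl : (ℓ : ℕ) = 0) :
      DEdgeE k N G (.a i) (.grid i j q ℓ .LB)
  /-- former edge `w_{i,k}^{q,N} → b_i` -/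
  | snkB (i j : Fin k) (q ℓ : Fin N) (hj : (j : ℕ) + 1 = k) (hl : (ℓ : ℕ) + 1 = N) :
      DEdgeE k N G (.grid i j q ℓ .TR) (.b i)
  /-- former edge `c_j → w_{1,j}^{1,ℓ}` -/
  | srcC (i j : Fin k) (q ℓ : Fin N) (hi : (i : ℕ) = 0) (hq : (q : ℕ) = 0) :
      DEdgeE k N G (.c j) (.grid i j q ℓ .LB)
  /-- former edge `w_{k,j}^{N,ℓ} → d_j` -/
  | snkD (i j : Fin k) (q ℓ : Fin N) (hi : (i : ℕ) + 1 = k) (hq : (q : ℕ) + 1 = N) :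
      DEdgeE k N G (.grid i j q ℓ .TR) (.d j)

/-- The three vertices `w_LB, w_?, w_TR` replacing a grid vertex `w` on (the image of)
a canonical path: the middle vertex is `w_Mid` if `w` is one-split, and is chosen among
`w_Hor` / `w_Ver` (according to `b`) if `w` is two-split. -/
def eTriple {k N : ℕ} (G : SimpleGraph (Fin N)) [DecidableRel G.Adj]
    (i j : Fin k) (q ℓ : Fin N) (b : Bool) : List (DEdgeV k N) :=
  [DEdgeV.grid i j q ℓ ETag.LB,
   DEdgeV.grid i j q ℓ
     (if Split G i j q ℓ then (if b then ETag.Hor else ETag.Ver) else ETag.Mid),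
   DEdgeV.grid i j q ℓ ETag.TR]

/-- An image in `D_edge`/`U_edge` of the horizontal canonical path
`Canonical(r; c_j⇝d_j)` of `D_int`, determined by a choice `χ` of `Hor`/`Ver`
at each two-split vertex. -/
def imageH {k N : ℕ} (G : SimpleGraph (Fin N)) [DecidableRel G.Adj]
    (χ : Fin k → Fin N → Bool) (j : Fin k) (r : Fin N) : List (DEdgeV k N) :=
  DEdgeV.c j ::
    (((List.finRange k).flatMap fun i =>
        (List.finRange N).flatMap fun q => eTriple G i j q r (χ i q)) ++ [DEdgeV.d j])

/-- An image in `D_edge`/`U_edge` of the vertical canonical path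
`Canonical(r; a_i⇝b_i)` of `D_int`, determined by a choice `χ` of `Hor`/`Ver`
at each two-split vertex. -/
def imageV {k N : ℕ} (G : SimpleGraph (Fin N)) [DecidableRel G.Adj]
    (χ : Fin k → Fin N → Bool) (i : Fin k) (r : Fin N) : List (DEdgeV k N) :=
  DEdgeV.a i ::
    (((List.finRange k).flatMap fun j =>
        (List.finRange N).flatMap fun ℓ => eTriple G i j r ℓ (χ j ℓ)) ++ [DEdgeV.b i])

/-- `Canonical_edge(r; c_j⇝d_j)`: the image of `Canonical(r; c_j⇝d_j)` choosing
`w_LB → w_Hor → w_TR` at every two-split vertex. -/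
def canonEdgeH {k N : ℕ} (G : SimpleGraph (Fin N)) [DecidableRel G.Adj]
    (j : Fin k) (r : Fin N) : List (DEdgeV k N) :=
  imageH G (fun _ _ => true) j r

/-- `Canonical_edge(r; a_i⇝b_i)`: the image of `Canonical(r; a_i⇝b_i)` choosing
`w_LB → w_Ver → w_TR` at every two-split vertex. -/
def canonEdgeV {k N : ℕ} (G : SimpleGraph (Fin N)) [DecidableRel G.Adj]
    (i : Fin k) (r : Fin N) : List (DEdgeV k N) :=
  imageV G (fun _ _ => false) i r
/-- The source of the `x`-th terminal pair of `T`: `a_i` for `x = inl i`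
(pair `(a_i, b_i)`), and `c_j` for `x = inr j` (pair `(c_j, d_j)`). -/
def eSrc {k N : ℕ} (x : Fin k ⊕ Fin k) : DEdgeV k N :=
  match x with
  | .inl i => DEdgeV.a i
  | .inr j => DEdgeV.c j

/-- The sink of the `x`-th terminal pair of `T`. -/
def eDst {k N : ℕ} (x : Fin k ⊕ Fin k) : DEdgeV k N :=
  match x with
  | .inl i => DEdgeV.b i
  | .inr j => DEdgeV.d j

/-!
Let `colPotential` be the position of a vertex along the canonical `a_i ⇝ b_i` paths. It rises
by at most one along every edge of `D_edge`, and the canonical paths attain this bound, so a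
shortest `a_i ⇝ b_i` path raises it by exactly one at every step. Such a path cannot leave the row
`r_i` of the grids `D_{i,·}` in which it enters them, and it passes through every vertex `w_LB` of
that row. Transposing the grid, a shortest `c_j ⇝ d_j` path passes through every `w_LB` of one
column `s_j` of the grids `D_{·,j}`. If `(r_i, s_j) ∉ S_{i,j}`, both paths leave
`w_{i,j}^{r_i,s_j}` along its only out-edge `w_LB → w_Mid`, so edge-disjointness gives
`(r_i, s_j) ∈ S_{i,j}` whenever both pairs are satisfied. For the at least `2εk` indices `i` whose
two pairs are both satisfied this says `r_i = s_i` and that these `r_i` are pairwise adjacent.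
-/

section Walks

variable {V : Type*} {E : V → V → Prop} {s t : V} {p : List V}

structure IsWalkList (E : V → V → Prop) (s t : V) (p : List V) : Prop where
  chain : p.IsChain E
  head : p.head? = some s
  last : p.getLast? = some t

theorem IsPathList.isWalkList (h : IsPathList E s t p) : IsWalkList E s t p :=
  ⟨h.chain, h.head, h.last⟩

namespace IsWalkList

theorem singleton (s : V) : IsWalkList E s s [s] := ⟨.singleton s, rfl, rfl⟩

theorem eq_of_singleton {x : V} (h : IsWalkList E s t [x]) : x = s ∧ x = t := by
  simpa using And.intro h.head h.last

theorem of_cons_cons {x y : V} {l : List V} (h : IsWalkList E s t (x :: y :: l)) :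
    x = s ∧ E x y ∧ IsWalkList E y t (y :: l) := by
  obtain ⟨hc, hs, ht⟩ := h
  rw [List.isChain_cons_cons] at hc
  exact ⟨by simpa using hs, hc.1, hc.2, rfl, by simpa using ht⟩

theorem concat {x y : V} (h : IsWalkList E s x p) (hxy : E x y) :
    IsWalkList E s y (p ++ [y]) := by
  have hp : p ≠ [] := by rintro rfl; exact nomatch h.head
  refine ⟨h.chain.append (.singleton y) ?_, ?_, by simp⟩
  · simpa [h.last] using hxy
  · rw [List.head?_append_of_ne_nil _ hp, h.head]

theorem exists_eq_cons_cons (h : IsWalkList E s t p) (hst : s ≠ t) :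
    ∃ y l, p = s :: y :: l := by
  match p, h with
  | [], h => exact nomatch h.head
  | [_], h => obtain ⟨rfl, rfl⟩ := h.eq_of_singleton; exact absurd rfl hst
  | _ :: y :: l, h => obtain ⟨rfl, -⟩ := h.of_cons_cons; exact ⟨y, l, rfl⟩

section Potential

variable {g : V → ℕ}

theorem potential_le_add_length (hg : ∀ x y, E x y → g y ≤ g x + 1) :
    ∀ {s p}, IsWalkList E s t p → g t + 1 ≤ g s + p.length
  | _, [], h => nomatch h.head
  | _, [_], h => by obtain ⟨rfl, rfl⟩ := h.eq_of_singleton; simp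
  | _, _ :: y :: l, h => by
    obtain ⟨rfl, hxy, htail⟩ := h.of_cons_cons
    have := potential_le_add_length hg htail
    have := hg _ _ hxy
    simp only [List.length_cons] at *
    omega

theorem tight_of_length_eq (hg : ∀ x y, E x y → g y ≤ g x + 1) :
    ∀ {s p}, IsWalkList E s t p → g s + p.length = g t + 1 →
      IsWalkList (fun x y => E x y ∧ g y = g x + 1) s t p
  | _, [], h, _ => nomatch h.head
  | _, [_], h, _ => ⟨.singleton _, h.head, h.last⟩
  | _, x :: y :: l, h, hlen => by
    obtain ⟨rfl, hxy, htail⟩ := h.of_cons_cons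
    have := potential_le_add_length hg htail
    have := hg _ _ hxy
    simp only [List.length_cons] at *
    have hstep : g y = g x + 1 := by omega
    have htail' := tight_of_length_eq hg htail (by simp only [List.length_cons]; omega)
    exact ⟨List.isChain_cons_cons.2 ⟨⟨hxy, hstep⟩, htail'.chain⟩, rfl, htail'.last⟩

theorem nodup_of_tight (h : IsWalkList (fun x y => E x y ∧ g y = g x + 1) s t p) : p.Nodup := by
  have hmono : (p.map g).IsChain (· < ·) :=
    (List.isChain_map g).2 (h.chain.imp fun x y hxy => by omega)
  exact List.Nodup.of_map g (hmono.pairwise.imp ne_of_lt)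

theorem exists_mem_potential_eq {R : V → V → Prop} (hR : ∀ x y, R x y → g y = g x + 1) :
    ∀ {s p}, IsWalkList R s t p → ∀ n, g s ≤ n → n ≤ g t → ∃ v ∈ p, g v = n
  | _, [], h, _, _, _ => nomatch h.head
  | _, [_], h, n, h1, h2 => by
    obtain ⟨rfl, rfl⟩ := h.eq_of_singleton
    exact ⟨_, List.mem_singleton_self _, by omega⟩
  | _, x :: y :: l, h, n, h1, h2 => by
    obtain ⟨rfl, hxy, htail⟩ := h.of_cons_cons
    rcases h1.eq_or_lt with rfl | hlt
    · exact ⟨x, List.mem_cons_self, rfl⟩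
    · have := hR _ _ hxy
      obtain ⟨v, hv, rfl⟩ := exists_mem_potential_eq hR htail n (by omega) h2
      exact ⟨v, List.mem_cons_of_mem _ hv, rfl⟩

end Potential

theorem exists_mem_dirEdges :
    ∀ {s p}, IsWalkList E s t p → ∀ v ∈ p, v ≠ t →
      ∃ w, E v w ∧ (v, w) ∈ dirEdges p
  | _, [], h, _, _, _ => nomatch h.head
  | _, [_], h, v, hv, hvt => by
    obtain ⟨-, rfl⟩ := h.eq_of_singleton
    exact absurd (List.mem_singleton.1 hv) hvt
  | _, x :: y :: l, h, v, hv, hvt => by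
    obtain ⟨rfl, hxy, htail⟩ := h.of_cons_cons
    rcases List.mem_cons.1 hv with rfl | hv
    · exact ⟨y, hxy, List.mem_cons_self⟩
    · obtain ⟨w, hvw, hmem⟩ := exists_mem_dirEdges htail v hv hvt
      exact ⟨w, hvw, List.mem_cons_of_mem _ hmem⟩

end IsWalkList

theorem IsPathList.map {f : V → V} (hf : f.Injective) (hE : ∀ x y, E x y → E (f x) (f y))
    (h : IsPathList E s t p) : IsPathList E (f s) (f t) (p.map f) :=
  ⟨(List.isChain_map f).2 (h.chain.imp hE), h.nodup.map hf, by simp [h.head],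
    by simp [h.last]⟩

theorem IsShortestDirPath.map {f : V → V} (hf : f.Involutive)
    (hE : ∀ x y, E x y → E (f x) (f y))
    (h : IsShortestDirPath E s t p) : IsShortestDirPath E (f s) (f t) (p.map f) := by
  refine ⟨h.1.map hf.injective hE, fun q hq => ?_⟩
  have := h.2 _ (by simpa [hf s, hf t] using hq.map hf.injective hE)
  simpa using this

end Walks

namespace ETag

def rank : ETag → ℕ
  | LB => 0
  | TR => 2
  | _ => 1

def transpose : ETag → ETag
  | Hor => Ver
  | Ver => Hor
  | t => t

end ETag

namespace DEdgeV

variable {k N : ℕ}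

/-- `c_j` and `d_j` lie on no `a_i ⇝ b_i` path; their values only keep the increase along every
edge at most one. -/
def colPotential : DEdgeV k N → ℕ
  | grid _ j _ ℓ t => 3 * finProdFinEquiv (j, ℓ) + t.rank + 1
  | a _ => 0
  | b _ | c _ => 3 * (k * N) + 1
  | d _ => 0

def InRow (i : Fin k) (r : Fin N) : DEdgeV k N → Prop
  | grid i' _ q _ _ => i' = i ∧ q = r
  | b i' => i' = i
  | _ => False

def transpose : DEdgeV k N → DEdgeV k N
  | grid i j q ℓ t => grid j i ℓ q t.transpose
  | a i => c i
  | b i => d i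
  | c j => a j
  | d j => b j

theorem transpose_involutive : Function.Involutive (transpose : DEdgeV k N → DEdgeV k N) := by
  rintro (⟨i, j, q, ℓ, _ | _ | _ | _ | _⟩ | _ | _ | _ | _) <;> rfl

theorem InRow.eq_grid_LB {i : Fin k} {r : Fin N} {v : DEdgeV k N} (hv : v.InRow i r)
    (j : Fin k) (ℓ : Fin N) (hcol : v.colPotential = 3 * finProdFinEquiv (j, ℓ) + 1) :
    v = grid i j r ℓ .LB := by
  cases v with
  | grid i' j' q ℓ' t =>
    obtain ⟨rfl, rfl⟩ := hv
    have hrank : t.rank ≤ 2 := by cases t <;> simp [ETag.rank]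
    simp only [colPotential] at hcol
    have ht : t.rank = 0 := by omega
    have hcol' : finProdFinEquiv (j', ℓ') = finProdFinEquiv (j, ℓ) := Fin.ext (by omega)
    obtain ⟨rfl, rfl⟩ := Prod.mk.inj (finProdFinEquiv.injective hcol')
    cases t <;> simp_all [ETag.rank]
  | b _ =>
    have := (finProdFinEquiv (j, ℓ)).isLt
    simp only [colPotential] at hcol
    omega
  | _ => exact hv.elim

end DEdgeV

open DEdgeV

theorem split_comm {k N : ℕ} {G : SimpleGraph (Fin N)} {i j : Fin k} {q ℓ : Fin N} :
    Split G j i ℓ q ↔ Split G i j q ℓ := by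
  simp only [Split, G.adj_comm ℓ q, ne_comm, @eq_comm _ j, @eq_comm _ ℓ]

namespace DEdgeE

variable {k N : ℕ} {G : SimpleGraph (Fin N)} {x y : DEdgeV k N}

theorem colPotential_le (h : DEdgeE k N G x y) : y.colPotential ≤ x.colPotential + 1 := by
  cases h with
  | vmatch i j j' q ℓ ℓ' hj hl hl' =>
    simp only [colPotential, ETag.rank, finProdFinEquiv_apply_val, hj, hl', Nat.mul_succ]
    omega
  | snkB i j q ℓ hj hl =>
    have hkN : k * N = N * j + N := by
      calc k * N = (j + 1) * N := by rw [hj]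
        _ = N * j + N := by ring
    simp only [colPotential, ETag.rank, finProdFinEquiv_apply_val]
    omega
  | srcC i j q ℓ =>
    have := (finProdFinEquiv (j, ℓ)).isLt
    simp only [colPotential, ETag.rank]
    omega
  | _ => simp_all [colPotential, ETag.rank] <;> omega

theorem inRow_of_tight {i : Fin k} {r : Fin N} (h : DEdgeE k N G x y)
    (hxy : y.colPotential = x.colPotential + 1) (hx : x.InRow i r) : y.InRow i r := by
  cases h <;> simp_all [colPotential, InRow, ETag.rank]

theorem eq_mid_of_not_split {i j : Fin k} {q ℓ : Fin N}
    (h : DEdgeE k N G (.grid i j q ℓ .LB) y) (hs : ¬Split G i j q ℓ) :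
    y = .grid i j q ℓ .Mid := by
  cases h <;> first | rfl | contradiction

theorem transpose (h : DEdgeE k N G x y) : DEdgeE k N G x.transpose y.transpose := by
  cases h with
  | mid1 i j q ℓ h => exact mid1 j i ℓ q (split_comm.not.2 h)
  | mid2 i j q ℓ h => exact mid2 j i ℓ q (split_comm.not.2 h)
  | hor1 i j q ℓ h => exact ver1 j i ℓ q (split_comm.2 h)
  | hor2 i j q ℓ h => exact ver2 j i ℓ q (split_comm.2 h)
  | ver1 i j q ℓ h => exact hor1 j i ℓ q (split_comm.2 h)
  | ver2 i j q ℓ h => exact hor2 j i ℓ q (split_comm.2 h)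
  | up i j q ℓ ℓ' h => exact right j i ℓ ℓ' q h
  | right i j q q' ℓ h => exact up j i ℓ q q' h
  | hmatch i i' j q q' ℓ hi hq hq' => exact vmatch j i i' ℓ q q' hi hq hq'
  | vmatch i j j' q ℓ ℓ' hj hl hl' => exact hmatch j j' i ℓ ℓ' q hj hl hl'
  | srcA i j q ℓ hj hl => exact srcC j i ℓ q hj hl
  | snkB i j q ℓ hj hl => exact snkD j i ℓ q hj hl
  | srcC i j q ℓ hi hq => exact srcA j i ℓ q hi hq
  | snkD i j q ℓ hi hq => exact snkB j i ℓ q hi hq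

theorem exists_through_grid (i j : Fin k) (q ℓ : Fin N) :
    ∃ t, DEdgeE k N G (.grid i j q ℓ .LB) (.grid i j q ℓ t) ∧
      DEdgeE k N G (.grid i j q ℓ t) (.grid i j q ℓ .TR) := by
  by_cases hs : Split G i j q ℓ
  · exact ⟨.Hor, hor1 i j q ℓ hs, hor2 i j q ℓ hs⟩
  · exact ⟨.Mid, mid1 i j q ℓ hs, mid2 i j q ℓ hs⟩

end DEdgeE

section Paths

variable {k N : ℕ} {G : SimpleGraph (Fin N)}

theorem IsWalkList.exists_concat_through_grid {s x : DEdgeV k N} {p : List (DEdgeV k N)}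
    (hp : IsWalkList (DEdgeE k N G) s x p) {i j : Fin k} {q ℓ : Fin N}
    (hx : DEdgeE k N G x (.grid i j q ℓ .LB)) :
    ∃ p', IsWalkList (DEdgeE k N G) s (.grid i j q ℓ .TR) p' ∧ p'.length = p.length + 3 := by
  obtain ⟨t, hLB, hTR⟩ := DEdgeE.exists_through_grid (G := G) i j q ℓ
  exact ⟨_, ((hp.concat hx).concat hLB).concat hTR, by simp⟩

theorem DEdgeE.exists_walk_to_grid_TR (i : Fin k) (r : Fin N) :
    ∀ (n : ℕ) (j : Fin k) (ℓ : Fin N), N * j + ℓ = n →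
      ∃ p, IsWalkList (DEdgeE k N G) (.a i) (.grid i j r ℓ .TR) p ∧ p.length = 3 * n + 4
  | 0, j, ℓ, hc => by
    have hN : 0 < N := ℓ.pos
    have hℓ : (ℓ : ℕ) = 0 := by omega
    have hj : (j : ℕ) = 0 := by
      rcases Nat.eq_zero_of_add_eq_zero hc with ⟨h, -⟩
      exact (Nat.mul_eq_zero.1 h).resolve_left hN.ne'
    exact (IsWalkList.singleton _).exists_concat_through_grid (.srcA i j r ℓ hj hℓ)
  | n + 1, j, ℓ, hc => by
    have hN : 0 < N := ℓ.pos
    by_cases hℓ : (ℓ : ℕ) = 0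
    · obtain ⟨j', hj'⟩ : ∃ j', (j : ℕ) = j' + 1 :=
        Nat.exists_eq_succ_of_ne_zero fun hj => by simp [hj, hℓ] at hc
      have hjk : j' < k := by omega
      obtain ⟨p, hp, hlen⟩ :=
        DEdgeE.exists_walk_to_grid_TR i r n ⟨j', hjk⟩ ⟨N - 1, by omega⟩
        (by simp only [hj', Nat.mul_succ] at hc; simp only; omega)
      obtain ⟨p', hp', hlen'⟩ := hp.exists_concat_through_grid
        (.vmatch i ⟨j', hjk⟩ j r ⟨N - 1, by omega⟩ ℓ hj' (by simp only; omega) hℓ)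
      exact ⟨p', hp', by omega⟩
    · obtain ⟨p, hp, hlen⟩ := DEdgeE.exists_walk_to_grid_TR i r n j ⟨ℓ - 1, by omega⟩
        (by simp only; omega)
      obtain ⟨p', hp', hlen'⟩ := hp.exists_concat_through_grid
        (.up i j r ⟨ℓ - 1, by omega⟩ ℓ (by simp only; omega))
      exact ⟨p', hp', by omega⟩

theorem DEdgeE.exists_canonical_path (i : Fin k) (r : Fin N) :
    ∃ p, IsPathList (DEdgeE k N G) (.a i) (.b i) p ∧ p.length = 3 * (k * N) + 2 := by
  obtain ⟨k', rfl⟩ := Nat.exists_eq_succ_of_ne_zero i.pos.ne'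
  obtain ⟨N', rfl⟩ := Nat.exists_eq_succ_of_ne_zero r.pos.ne'
  obtain ⟨p, hp, hlen⟩ :=
    DEdgeE.exists_walk_to_grid_TR (G := G) i r _ (Fin.last k') (Fin.last N') rfl
  have hwalk := hp.concat (DEdgeE.snkB i (Fin.last k') r (Fin.last N') rfl rfl)
  have hlen' : (p ++ [DEdgeV.b i]).length = 3 * ((k' + 1) * (N' + 1)) + 2 := by
    simp only [List.length_append, List.length_singleton, hlen, Fin.val_last, Nat.succ_eq_add_one]
    ring
  have htight := hwalk.tight_of_length_eq (fun _ _ h => h.colPotential_le)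
    (by simp only [hlen', colPotential, Nat.succ_eq_add_one]; ring)
  exact ⟨_, ⟨hwalk.chain, htight.nodup_of_tight, hwalk.head, hwalk.last⟩, hlen'⟩

theorem IsShortestDirPath.exists_row_mem {i : Fin k} {p : List (DEdgeV k N)}
    (hp : IsShortestDirPath (DEdgeE k N G) (.a i) (.b i) p) :
    ∃ r, ∀ j ℓ, .grid i j r ℓ .LB ∈ p := by
  obtain ⟨hpath, hmin⟩ := hp
  have hwalk := hpath.isWalkList
  obtain ⟨y, l, rfl⟩ := hwalk.exists_eq_cons_cons (by simp)
  obtain ⟨-, hay, -⟩ := hwalk.of_cons_cons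
  cases hay with | srcA _ j₀ r ℓ₀ hj₀ hℓ₀ => ?_
  obtain ⟨c, hc, hclen⟩ := DEdgeE.exists_canonical_path (G := G) i r
  have hlen : (DEdgeV.a i :: _ :: l).length = 3 * (k * N) + 2 :=
    le_antisymm (hclen ▸ hmin c hc)
      (by simpa [colPotential] using hwalk.potential_le_add_length fun _ _ h => h.colPotential_le)
  have htight := hwalk.tight_of_length_eq (fun _ _ h => h.colPotential_le)
    (by simp only [hlen, colPotential]; ring)
  obtain ⟨-, -, htail⟩ := htight.of_cons_cons
  have hrow : ∀ v ∈ DEdgeV.grid i j₀ r ℓ₀ .LB :: l, v.InRow i r :=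
    htail.chain.induction _ _ (fun _ _ h => h.1.inRow_of_tight h.2) fun _ => ⟨rfl, rfl⟩
  refine ⟨r, fun j ℓ => ?_⟩
  have hbound := (finProdFinEquiv (j, ℓ)).isLt
  obtain ⟨v, hv, hcol⟩ := htail.exists_mem_potential_eq (fun _ _ h => h.2)
    (3 * finProdFinEquiv (j, ℓ) + 1)
    (by simp [colPotential, ETag.rank, hj₀, hℓ₀]) (by simp only [colPotential]; omega)
  exact (hrow v hv).eq_grid_LB j ℓ hcol ▸ List.mem_cons_of_mem _ hv

theorem IsShortestDirPath.exists_col_mem {j : Fin k} {p : List (DEdgeV k N)}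
    (hp : IsShortestDirPath (DEdgeE k N G) (.c j) (.d j) p) :
    ∃ s, ∀ i q, .grid i j q s .LB ∈ p := by
  obtain ⟨s, hs⟩ := (hp.map transpose_involutive fun _ _ h => h.transpose).exists_row_mem
  refine ⟨s, fun i q => ?_⟩
  obtain ⟨v, hv, hvs⟩ := List.mem_map.1 (hs i q)
  rw [← transpose_involutive v, hvs] at hv
  exact hv

theorem IsPathList.mem_dirEdges_of_not_split {s t : DEdgeV k N} {p : List (DEdgeV k N)}
    (hp : IsPathList (DEdgeE k N G) s t p) {i j : Fin k} {q ℓ : Fin N}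
    (hmem : .grid i j q ℓ .LB ∈ p) (ht : t ≠ .grid i j q ℓ .LB) (hs : ¬Split G i j q ℓ) :
    (.grid i j q ℓ .LB, .grid i j q ℓ .Mid) ∈ dirEdges p := by
  obtain ⟨w, hw, hmem'⟩ := hp.isWalkList.exists_mem_dirEdges _ hmem ht.symm
  rwa [hw.eq_mid_of_not_split hs] at hmem'

end Paths

theorem isNClique_image_of_split {k N : ℕ} {G : SimpleGraph (Fin N)} {I : Finset (Fin k)}
    {r s : Fin k → Fin N} (h : ∀ i ∈ I, ∀ j ∈ I, Split G i j (r i) (s j)) :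
    G.IsNClique I.card (I.image r) := by
  have hdiag : ∀ i ∈ I, r i = s i := fun i hi => by
    simpa [Split] using h i hi i hi
  have hadj : ∀ i ∈ I, ∀ j ∈ I, i ≠ j → G.Adj (r i) (r j) := fun i hi j hj hij => by
    simpa [Split, hij, hdiag j hj] using h i hi j hj
  refine ⟨?_, Finset.card_image_of_injOn fun i hi j hj hrij => ?_⟩
  · simp only [Finset.coe_image]
    rintro _ ⟨i, hi, rfl⟩ _ ⟨j, hj, rfl⟩ hne
    exact hadj i hi j hj (ne_of_apply_ne r hne)
  · by_contra hij
    exact G.irrefl (hrij ▸ hadj i hi j hj hij)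

theorem Finset.card_le_card_toLeft_inter_toRight_add {ι : Type*} [Fintype ι] [DecidableEq ι]
    (S : Finset (ι ⊕ ι)) : S.card ≤ (S.toLeft ∩ S.toRight).card + Fintype.card ι := by
  have := Finset.card_inter_add_card_union S.toLeft S.toRight
  have := (S.toLeft ∪ S.toRight).card_le_univ
  have := S.card_toLeft_add_card_toRight
  omega

theorem DEdge_soundness_general (N k : ℕ) (hN : 1 ≤ N)
    (G : SimpleGraph (Fin N))
    (ε : ℝ)
    (SAT : Finset (Fin k ⊕ Fin k)) (P : Fin k ⊕ Fin k → List (DEdgeV k N))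
    (hcard : (1 / 2 + ε) * (2 * k) ≤ (SAT.card : ℝ))
    (hshort : ∀ x ∈ SAT, IsShortestDirPath (DEdgeE k N G) (eSrc x) (eDst x) (P x))
    (hdisj : ∀ x ∈ SAT, ∀ y ∈ SAT, x ≠ y → EdgeDisj (P x) (P y)) :
    ∃ Z : Finset (Fin N),
      2 * ε * k ≤ (Z.card : ℝ) ∧ ∀ u ∈ Z, ∀ v ∈ Z, u ≠ v → G.Adj u v := by
  have hrow (i : Fin k) : ∃ r, .inl i ∈ SAT → ∀ j ℓ, .grid i j r ℓ .LB ∈ P (.inl i) :=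
    if hi : .inl i ∈ SAT then (hshort _ hi).exists_row_mem.imp fun _ h _ => h
    else ⟨⟨0, hN⟩, fun h => absurd h hi⟩
  have hcol (j : Fin k) : ∃ s, .inr j ∈ SAT → ∀ i q, .grid i j q s .LB ∈ P (.inr j) :=
    if hj : .inr j ∈ SAT then (hshort _ hj).exists_col_mem.imp fun _ h _ => h
    else ⟨⟨0, hN⟩, fun h => absurd h hj⟩
  choose r hr using hrow
  choose s hs using hcol
  have hsplit : ∀ i ∈ SAT.toLeft ∩ SAT.toRight, ∀ j ∈ SAT.toLeft ∩ SAT.toRight,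
      Split G i j (r i) (s j) := by
    intro i hi j hj
    simp only [Finset.mem_inter, Finset.mem_toLeft, Finset.mem_toRight] at hi hj
    by_contra hns
    exact hdisj _ hi.1 _ hj.2 Sum.inl_ne_inr _
      ((hshort _ hi.1).1.mem_dirEdges_of_not_split (hr i hi.1 j (s j)) (by simp [eDst]) hns)
      ((hshort _ hj.2).1.mem_dirEdges_of_not_split (hs j hj.2 i (r i)) (by simp [eDst]) hns)
  have hclique := isNClique_image_of_split hsplit
  refine ⟨_, ?_, fun u hu v hv => hclique.isClique hu hv⟩
  have hcount : (SAT.card : ℝ) ≤ (SAT.toLeft ∩ SAT.toRight).card + k := by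
    exact_mod_cast Fintype.card_fin k ▸ SAT.card_le_card_toLeft_inter_toRight_add
  rw [hclique.card_eq]
  linarith

/-- let `0 < ε ≤ 1/2`. If there is a collection `P` of pairwise
edge-disjoint directed paths in `D_edge` such that for at least `(1/2 + ε)·2k` of the
`2k` terminal pairs `(s,t) ∈ T` the collection contains a shortest `s⇝t` path, then `G`
contains a clique of size at least `2εk`. -/
theorem DEdge_soundness (N k : ℕ) (hN : 1 ≤ N) (hk : 1 ≤ k)
    (G : SimpleGraph (Fin N)) [DecidableRel G.Adj]
    (ε : ℝ) (hε0 : 0 < ε) (hε : ε ≤ 1 / 2)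
    (SAT : Finset (Fin k ⊕ Fin k)) (P : Fin k ⊕ Fin k → List (DEdgeV k N))
    (hcard : (1 / 2 + ε) * (2 * k) ≤ (SAT.card : ℝ))
    (hshort : ∀ x ∈ SAT, IsShortestDirPath (DEdgeE k N G) (eSrc x) (eDst x) (P x))
    (hdisj : ∀ x ∈ SAT, ∀ y ∈ SAT, x ≠ y → EdgeDisj (P x) (P y)) :
    ∃ Z : Finset (Fin N),
      2 * ε * k ≤ (Z.card : ℝ) ∧ ∀ u ∈ Z, ∀ v ∈ Z, u ≠ v → G.Adj u v :=
  DEdge_soundness_general N k hN G ε SAT P hcard hshort hdisj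
end

section
/- If G contains a clique {v_{γ_1},…,v_{γ_k}} of size k (k distinct, pairwise adjacent vertices), then the 2k directed paths Canonical_vertex(γ_i; a_i⇝b_i) for i ∈ [k] and Canonical_vertex(γ_j; c_j⇝d_j) for j ∈ [k] are pairwise vertex-disjoint and each is a shortest path in D_vertex between its terminal pair; in particular all 2k terminal pairs of (D_vertex, T) can be simultaneously satisfied by pairwise vertex-disjoint shortest paths. -/
/-- The vertices of the graph `D_vertex` (also the vertex set of `U_vertex`): each grid
vertex `w_{i,j}^{q,ℓ}` of `D_int` gives rise to `gridH i j q ℓ` (the vertex `w_Hor`) and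
`gridV i j q ℓ` (the vertex `w_Ver`, which carries edges only when `w` is vertex-split;
when `w` is not split the single vertex `w_Hor = w_Ver` is represented by `gridH` and
`gridV` is isolated), plus the terminal vertices. -/
inductive DVertV (k N : ℕ) where
  | gridH (i j : Fin k) (q ℓ : Fin N)
  | gridV (i j : Fin k) (q ℓ : Fin N)
  | a (i : Fin k)
  | b (i : Fin k)
  | c (j : Fin k)
  | d (j : Fin k)
  deriving DecidableEq

/-- The vertex of `D_vertex` carrying the vertical (south/north) edges at the former
grid vertex `w_{i,j}^{q,ℓ}`: `w_Ver` if it is vertex-split, and `w_Hor = w_Ver`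
otherwise. -/
def vNode {k N : ℕ} (G : SimpleGraph (Fin N)) [DecidableRel G.Adj]
    (i j : Fin k) (q ℓ : Fin N) : DVertV k N :=
  if Split G i j q ℓ then DVertV.gridV i j q ℓ else DVertV.gridH i j q ℓ

/-- The directed edges of `D_vertex`: horizontal (west/east) edges attach to `w_Hor`
and vertical (south/north) edges attach to `w_Ver` (with `w_Hor = w_Ver` at non-split
vertices); terminal edges play the role of the corresponding boundary edges. -/
inductive DVertE (k N : ℕ) (G : SimpleGraph (Fin N)) [DecidableRel G.Adj] :
    DVertV k N → DVertV k N → Prop where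
  /-- former edge `w_{i,j}^{q,ℓ} → w_{i,j}^{q,ℓ+1}` (vertical) -/
  | up (i j : Fin k) (q ℓ ℓ' : Fin N) (h : (ℓ' : ℕ) = (ℓ : ℕ) + 1) :
      DVertE k N G (vNode G i j q ℓ) (vNode G i j q ℓ')
  /-- former edge `w_{i,j}^{q,ℓ} → w_{i,j}^{q+1,ℓ}` (horizontal) -/
  | right (i j : Fin k) (q q' ℓ : Fin N) (h : (q' : ℕ) = (q : ℕ) + 1) :
      DVertE k N G (.gridH i j q ℓ) (.gridH i j q' ℓ)
  /-- former edge `w_{i,j}^{N,ℓ} → w_{i+1,j}^{1,ℓ}` (horizontal) -/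
  | hmatch (i i' j : Fin k) (q q' ℓ : Fin N)
      (hi : (i' : ℕ) = (i : ℕ) + 1) (hq : (q : ℕ) + 1 = N) (hq' : (q' : ℕ) = 0) :
      DVertE k N G (.gridH i j q ℓ) (.gridH i' j q' ℓ)
  /-- former edge `w_{i,j}^{ℓ,N} → w_{i,j+1}^{ℓ,1}` (vertical) -/
  | vmatch (i j j' : Fin k) (q ℓ ℓ' : Fin N)
      (hj : (j' : ℕ) = (j : ℕ) + 1) (hl : (ℓ : ℕ) + 1 = N) (hl' : (ℓ' : ℕ) = 0) :
      DVertE k N G (vNode G i j q ℓ) (vNode G i j' q ℓ')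
  /-- former edge `a_i → w_{i,1}^{q,1}` (vertical: `a_i` plays the south neighbour) -/
  | srcA (i j : Fin k) (q ℓ : Fin N) (hj : (j : ℕ) = 0) (hl : (ℓ : ℕ) = 0) :
      DVertE k N G (.a i) (vNode G i j q ℓ)
  /-- former edge `w_{i,k}^{q,N} → b_i` (vertical) -/
  | snkB (i j : Fin k) (q ℓ : Fin N) (hj : (j : ℕ) + 1 = k) (hl : (ℓ : ℕ) + 1 = N) :
      DVertE k N G (vNode G i j q ℓ) (.b i)
  /-- former edge `c_j → w_{1,j}^{1,ℓ}` (horizontal: `c_j` plays the west neighbour) -/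
  | srcC (i j : Fin k) (q ℓ : Fin N) (hi : (i : ℕ) = 0) (hq : (q : ℕ) = 0) :
      DVertE k N G (.c j) (.gridH i j q ℓ)
  /-- former edge `w_{k,j}^{N,ℓ} → d_j` (horizontal) -/
  | snkD (i j : Fin k) (q ℓ : Fin N) (hi : (i : ℕ) + 1 = k) (hq : (q : ℕ) + 1 = N) :
      DVertE k N G (.gridH i j q ℓ) (.d j)

/-- `Canonical_vertex(r; c_j⇝d_j)`: obtained from `Canonical(r; c_j⇝d_j)` by routing
through `w_Hor` at every vertex-split grid vertex (and through `w_Hor = w_Ver` at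
not-split vertices). -/
def canonVertH (k N : ℕ) (j : Fin k) (r : Fin N) : List (DVertV k N) :=
  DVertV.c j ::
    (((List.finRange k).flatMap fun i =>
        (List.finRange N).map fun q => DVertV.gridH i j q r) ++ [DVertV.d j])

/-- `Canonical_vertex(r; a_i⇝b_i)`: obtained from `Canonical(r; a_i⇝b_i)` by routing
through `w_Ver` at every vertex-split grid vertex (and through `w_Hor = w_Ver` at
not-split vertices). -/
def canonVertV {k N : ℕ} (G : SimpleGraph (Fin N)) [DecidableRel G.Adj]
    (i : Fin k) (r : Fin N) : List (DVertV k N) :=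
  DVertV.a i ::
    (((List.finRange k).flatMap fun j =>
        (List.finRange N).map fun ℓ => vNode G i j r ℓ) ++ [DVertV.b i])

/-!
Every edge of `D_vertex` raises the "vertical level" `vLevel` (for grid vertices, the position
`j * N + ℓ` of row `ℓ` of `D_{i,j}` in the column of grids, shifted by one) by at most one, so an
`a_i ⇝ b_i` path has at least `vLevel (b i) - vLevel (a i) + 1 = k * N + 2` vertices, which is
exactly the number of vertices of a canonical vertical path. The horizontal level `hLevel` does
the same for the `c_j ⇝ d_j` paths.

Canonical paths of the same direction use different grids. A vertical path through column `γ_i`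
and a horizontal path through row `γ_j` can only meet at `w_{i,j}^{γ_i,γ_j}` when this vertex is
not split, and the clique condition says precisely that `(γ_i, γ_j) ∈ S_{i,j}`.
-/

namespace List

variable {α : Type*} {R : α → α → Prop}

theorem isChain_map_finRange {n : ℕ} {f : Fin n → α} :
    ((finRange n).map f).IsChain R ↔ ∀ q q' : Fin n, (q' : ℕ) = q + 1 → R (f q) (f q') := by
  rw [← ofFn_eq_map, isChain_ofFn]
  constructor
  · rintro h ⟨q, -⟩ ⟨_, hq'⟩ rfl
    exact h q hq'
  · exact fun h i hi => h _ _ rfl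

theorem head?_finRange_succ_s11 {n : ℕ} : (finRange (n + 1)).head? = some 0 := by
  simp [finRange_succ]

theorem getLast?_finRange_succ_s11 {n : ℕ} : (finRange (n + 1)).getLast? = some (Fin.last n) := by
  simp [finRange_succ_last]

theorem IsChain.add_one_le_add_length {φ : α → ℕ} (hφ : ∀ ⦃x y⦄, R x y → φ y ≤ φ x + 1) :
    ∀ {l : List α} {s t : α}, l.IsChain R → l.head? = some s → l.getLast? = some t →
      φ t + 1 ≤ φ s + l.length
  | [x], s, t, _, hs, ht => by simp_all
  | x :: y :: l, s, t, hl, hs, ht => by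
    rw [isChain_cons_cons] at hl
    obtain rfl : x = s := by simpa using hs
    have := hφ hl.1
    have := hl.2.add_one_le_add_length hφ rfl (by rwa [getLast?_cons_cons] at ht)
    simp only [length_cons] at *
    omega

end List

theorem isShortestDirPath_of_potential {V : Type*} {E : V → V → Prop} {s t : V} {p : List V}
    {φ : V → ℕ} (hφ : ∀ ⦃x y⦄, E x y → φ y ≤ φ x + 1) (hp : IsPathList E s t p)
    (hlen : p.length + φ s ≤ φ t + 1) : IsShortestDirPath E s t p :=
  ⟨hp, fun _ hq => by
    have := hq.chain.add_one_le_add_length hφ hq.head hq.last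
    omega⟩

section GridPath

variable {V : Type*} {k N : ℕ}

def gridPath (s t : V) (g : Fin k → Fin N → V) : List V :=
  s :: ((List.finRange k).flatMap (fun a => (List.finRange N).map (g a)) ++ [t])

variable {s t : V}

theorem mem_gridPath {g : Fin k → Fin N → V} {v : V} :
    v ∈ gridPath s t g ↔ v = s ∨ v = t ∨ ∃ a q, g a q = v := by
  simp only [gridPath, List.mem_cons, List.mem_append, List.mem_flatMap, List.mem_finRange,
    List.mem_map, true_and]
  aesop

theorem length_gridPath {g : Fin k → Fin N → V} : (gridPath s t g).length = k * N + 2 := by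
  simp [gridPath, List.length_flatMap]

theorem getLast?_gridPath {g : Fin k → Fin N → V} : (gridPath s t g).getLast? = some t := by
  rw [gridPath, ← List.cons_append, List.getLast?_concat]

theorem nodup_gridPath {g : Fin k → Fin N → V} (hg : Function.Injective2 g)
    (hs : ∀ a q, g a q ≠ s) (ht : ∀ a q, g a q ≠ t) (hst : s ≠ t) : (gridPath s t g).Nodup := by
  simp only [gridPath, List.nodup_cons, List.nodup_append, List.nodup_flatMap]
  refine ⟨?_, ⟨fun a _ => (List.nodup_finRange N).map (hg.right a), ?_⟩, by simp, ?_⟩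
  · simp [hst, hs]
  · refine (List.nodup_finRange k).imp fun hab => ?_
    simp only [List.disjoint_left, List.mem_map, List.mem_finRange, true_and]
    rintro _ ⟨q, rfl⟩ ⟨q', h⟩
    exact hab (hg h).1.symm
  · simp only [List.mem_flatMap, List.mem_map, List.mem_singleton]
    rintro _ ⟨a, -, q, -, rfl⟩ _ rfl
    exact ht a q

variable {R : V → V → Prop} {g : Fin (k + 1) → Fin (N + 1) → V}

theorem isChain_gridPath (hs : R s (g 0 0))
    (hrow : ∀ a (q q' : Fin (N + 1)), (q' : ℕ) = q + 1 → R (g a q) (g a q'))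
    (hnext : ∀ a a' : Fin (k + 1), (a' : ℕ) = a + 1 → R (g a (Fin.last N)) (g a' 0))
    (ht : R (g (Fin.last k) (Fin.last N)) t) : (gridPath s t g).IsChain R := by
  have hrows :
      ((List.finRange (k + 1)).flatMap fun a => (List.finRange (N + 1)).map (g a)).IsChain R := by
    rw [List.flatMap_def, List.isChain_flatten (by simp)]
    simpa [List.isChain_map_finRange, List.head?_finRange_succ_s11, List.getLast?_finRange_succ_s11]
      using ⟨hrow, hnext⟩
  rw [gridPath, List.isChain_cons, List.isChain_append]
  refine ⟨?_, hrows, List.isChain_singleton t, ?_⟩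
  · simpa [List.finRange_succ, List.findSome?_cons] using hs
  · simpa [List.finRange_succ_last] using ht

theorem isPathList_gridPath (hg : Function.Injective2 g) (hgs : ∀ a q, g a q ≠ s)
    (hgt : ∀ a q, g a q ≠ t) (hst : s ≠ t) (hs : R s (g 0 0))
    (hrow : ∀ a (q q' : Fin (N + 1)), (q' : ℕ) = q + 1 → R (g a q) (g a q'))
    (hnext : ∀ a a' : Fin (k + 1), (a' : ℕ) = a + 1 → R (g a (Fin.last N)) (g a' 0))
    (ht : R (g (Fin.last k) (Fin.last N)) t) : IsPathList R s t (gridPath s t g) :=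
  ⟨isChain_gridPath hs hrow hnext ht, nodup_gridPath hg hgs hgt hst, rfl, getLast?_gridPath⟩

end GridPath

section Levels

variable {k N : ℕ} (G : SimpleGraph (Fin N)) [DecidableRel G.Adj]
  {i i' j j' : Fin k} {q q' ℓ ℓ' : Fin N}

@[simp]
theorem vNode_inj :
    vNode G i j q ℓ = vNode G i' j' q' ℓ' ↔ i = i' ∧ j = j' ∧ q = q' ∧ ℓ = ℓ' := by
  unfold vNode
  split_ifs <;> simp <;> rintro rfl rfl rfl rfl <;> contradiction

theorem vNode_eq_gridH_iff :
    vNode G i j q ℓ = .gridH i' j' q' ℓ' ↔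
      ¬Split G i j q ℓ ∧ i = i' ∧ j = j' ∧ q = q' ∧ ℓ = ℓ' := by
  unfold vNode
  split_ifs <;> simp [*]

@[simp] theorem vNode_ne_a : vNode G i j q ℓ ≠ .a i' := by unfold vNode; split_ifs <;> simp
@[simp] theorem vNode_ne_b : vNode G i j q ℓ ≠ .b i' := by unfold vNode; split_ifs <;> simp
@[simp] theorem vNode_ne_c : vNode G i j q ℓ ≠ .c j' := by unfold vNode; split_ifs <;> simp
@[simp] theorem vNode_ne_d : vNode G i j q ℓ ≠ .d j' := by unfold vNode; split_ifs <;> simp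

/- The values at the terminals of the other direction are only constrained on one side
(`c_j` has no incoming and `d_j` no outgoing edges), and likewise for `hLevel`. -/
def vLevel : DVertV k N → ℕ
  | .gridH _ j _ ℓ | .gridV _ j _ ℓ => j * N + ℓ + 1
  | .a _ | .d _ => 0
  | .b _ => k * N + 1
  | .c j => j * N + N

def hLevel : DVertV k N → ℕ
  | .gridH i _ q _ | .gridV i _ q _ => i * N + q + 1
  | .b _ | .c _ => 0
  | .a i => i * N + N
  | .d _ => k * N + 1

@[simp]
theorem vLevel_vNode : vLevel (vNode G i j q ℓ) = j * N + ℓ + 1 := by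
  unfold vNode; split_ifs <;> rfl

@[simp]
theorem hLevel_vNode : hLevel (vNode G i j q ℓ) = i * N + q + 1 := by
  unfold vNode; split_ifs <;> rfl

variable {G}

theorem DVertE.vLevel_le ⦃u v : DVertV k N⦄ (h : DVertE k N G u v) :
    vLevel v ≤ vLevel u + 1 := by
  cases h with
  | vmatch _ j j' _ ℓ ℓ' hj =>
    have : j' * N = j * N + N := by rw [← add_one_mul, hj]
    simp only [vLevel_vNode]
    omega
  | snkB _ j _ ℓ hj =>
    have : k * N = j * N + N := by rw [← add_one_mul, hj]
    rw [vLevel_vNode, vLevel]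
    omega
  | srcA _ j _ ℓ hj =>
    rw [vLevel_vNode, vLevel, hj, zero_mul]
    omega
  | up => simp only [vLevel_vNode]; omega
  | right | hmatch | srcC | snkD => simp only [vLevel]; omega

theorem DVertE.hLevel_le ⦃u v : DVertV k N⦄ (h : DVertE k N G u v) :
    hLevel v ≤ hLevel u + 1 := by
  cases h with
  | hmatch i i' _ q q' _ hi =>
    have : i' * N = i * N + N := by rw [← add_one_mul, hi]
    simp only [hLevel]
    omega
  | snkD i _ q _ hi =>
    have : k * N = i * N + N := by rw [← add_one_mul, hi]
    simp only [hLevel]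
    omega
  | srcC i _ q _ hi =>
    simp only [hLevel, hi, zero_mul]
    omega
  | up | vmatch => simp only [hLevel_vNode]; omega
  | srcA | snkB => rw [hLevel_vNode, hLevel]; omega
  | right => simp only [hLevel]; omega

end Levels

section Canonical

variable {k N : ℕ} (G : SimpleGraph (Fin N)) [DecidableRel G.Adj]

theorem canonVertH_eq_gridPath (j : Fin k) (r : Fin N) :
    canonVertH k N j r = gridPath (.c j) (.d j) fun i q => .gridH i j q r :=
  rfl

theorem canonVertV_eq_gridPath (i : Fin k) (r : Fin N) :
    canonVertV G i r = gridPath (.a i) (.b i) fun j ℓ => vNode G i j r ℓ :=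
  rfl

theorem mem_canonVertH {j : Fin k} {r : Fin N} {v : DVertV k N} :
    v ∈ canonVertH k N j r ↔ v = .c j ∨ v = .d j ∨ ∃ i q, .gridH i j q r = v :=
  mem_gridPath

theorem mem_canonVertV {i : Fin k} {r : Fin N} {v : DVertV k N} :
    v ∈ canonVertV G i r ↔ v = .a i ∨ v = .b i ∨ ∃ j ℓ, vNode G i j r ℓ = v :=
  mem_gridPath

theorem isShortestDirPath_canonVertH (j : Fin k) (r : Fin N) :
    IsShortestDirPath (DVertE k N G) (.c j) (.d j) (canonVertH k N j r) := by
  obtain ⟨k, rfl⟩ := Nat.exists_eq_add_one.2 j.pos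
  obtain ⟨N, rfl⟩ := Nat.exists_eq_add_one.2 r.pos
  refine isShortestDirPath_of_potential DVertE.hLevel_le
    (isPathList_gridPath (g := fun i q => DVertV.gridH i j q r) ?_ (by simp) (by simp) (by simp)
      (DVertE.srcC 0 j 0 r rfl rfl) (fun i q q' h => DVertE.right i j q q' r h)
      (fun i i' h => DVertE.hmatch i i' j _ 0 r h (by simp) rfl)
      (DVertE.snkD _ j _ r (by simp) (by simp))) ?_
  · intro i i' q q' h
    simp_all
  · rw [canonVertH_eq_gridPath, length_gridPath]
    simp [hLevel]

theorem isShortestDirPath_canonVertV (i : Fin k) (r : Fin N) :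
    IsShortestDirPath (DVertE k N G) (.a i) (.b i) (canonVertV G i r) := by
  obtain ⟨k, rfl⟩ := Nat.exists_eq_add_one.2 i.pos
  obtain ⟨N, rfl⟩ := Nat.exists_eq_add_one.2 r.pos
  refine isShortestDirPath_of_potential DVertE.vLevel_le
    (isPathList_gridPath (g := fun j ℓ => vNode G i j r ℓ) ?_ (by simp) (by simp) (by simp)
      (DVertE.srcA i 0 r 0 rfl rfl) (fun j ℓ ℓ' h => DVertE.up i j r ℓ ℓ' h)
      (fun j j' h => DVertE.vmatch i j j' r _ 0 h (by simp) rfl)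
      (DVertE.snkB i _ r _ (by simp) (by simp))) ?_
  · intro j j' ℓ ℓ' h
    simp_all
  · rw [canonVertV_eq_gridPath, length_gridPath]
    simp [vLevel]

theorem vertDisj_canonVertV {i i' : Fin k} (h : i ≠ i') (r r' : Fin N) :
    VertDisj (canonVertV G i r) (canonVertV G i' r') := by
  intro v hv hv'
  rw [mem_canonVertV] at hv hv'
  rcases hv with rfl | rfl | ⟨j, ℓ, rfl⟩ <;> rcases hv' with h' | h' | ⟨j', ℓ', h'⟩ <;> simp_all

theorem vertDisj_canonVertH {j j' : Fin k} (h : j ≠ j') (r r' : Fin N) :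
    VertDisj (canonVertH k N j r) (canonVertH k N j' r') := by
  intro v hv hv'
  rw [mem_canonVertH] at hv hv'
  rcases hv with rfl | rfl | ⟨i, q, rfl⟩ <;> rcases hv' with h' | h' | ⟨i', q', h'⟩ <;> simp_all

theorem vertDisj_canonVertV_canonVertH {i j : Fin k} {r r' : Fin N} (h : Split G i j r r') :
    VertDisj (canonVertV G i r) (canonVertH k N j r') := by
  intro v hv hv'
  rw [mem_canonVertV] at hv
  rw [mem_canonVertH] at hv'
  obtain rfl | rfl | ⟨j', ℓ, rfl⟩ := hv
  · simp at hv'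
  · simp at hv'
  · obtain h' | h' | ⟨i', q, h'⟩ := hv'
    · exact vNode_ne_c G h'
    · exact vNode_ne_d G h'
    · obtain ⟨hns, rfl, rfl, rfl, rfl⟩ := (vNode_eq_gridH_iff G).1 h'.symm
      exact hns h

end Canonical

theorem DVert_completeness_general (N k : ℕ)
    (G : SimpleGraph (Fin N)) [DecidableRel G.Adj]
    (γ : Fin k → Fin N)
    (hadj : ∀ i i' : Fin k, i ≠ i' → G.Adj (γ i) (γ i')) :
    (∀ i : Fin k,
      IsShortestDirPath (DVertE k N G) (DVertV.a i) (DVertV.b i) (canonVertV G i (γ i))) ∧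
    (∀ j : Fin k,
      IsShortestDirPath (DVertE k N G) (DVertV.c j) (DVertV.d j) (canonVertH k N j (γ j))) ∧
    (∀ i i' : Fin k, i ≠ i' →
      VertDisj (canonVertV G i (γ i)) (canonVertV G i' (γ i'))) ∧
    (∀ j j' : Fin k, j ≠ j' →
      VertDisj (canonVertH k N j (γ j)) (canonVertH k N j' (γ j'))) ∧
    (∀ i j : Fin k, VertDisj (canonVertV G i (γ i)) (canonVertH k N j (γ j))) := by
  have hsplit (i j : Fin k) : Split G i j (γ i) (γ j) := by
    by_cases hij : i = j
    · exact .inl ⟨hij, congrArg γ hij⟩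
    · exact .inr ⟨hij, hadj i j hij⟩
  exact ⟨fun i => isShortestDirPath_canonVertV G i (γ i),
    fun j => isShortestDirPath_canonVertH G j (γ j),
    fun i i' h => vertDisj_canonVertV G h (γ i) (γ i'),
    fun j j' h => vertDisj_canonVertH h (γ j) (γ j'),
    fun i j => vertDisj_canonVertV_canonVertH G (hsplit i j)⟩

/-- if `G` contains a clique `{v_{γ_1},…,v_{γ_k}}` of size `k` (`k`
distinct, pairwise adjacent vertices), then the `2k` directed paths
`Canonical_vertex(γ_i; a_i⇝b_i)` (`i ∈ [k]`) and `Canonical_vertex(γ_j; c_j⇝d_j)`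
(`j ∈ [k]`) are pairwise vertex-disjoint and each is a shortest path in `D_vertex`
between its terminal pair: all `2k` terminal pairs of `(D_vertex, T)` are simultaneously
satisfied. -/
theorem DVert_completeness (N k : ℕ) (hN : 1 ≤ N) (hk : 1 ≤ k)
    (G : SimpleGraph (Fin N)) [DecidableRel G.Adj]
    (γ : Fin k → Fin N) (hinj : Function.Injective γ)
    (hadj : ∀ i i' : Fin k, i ≠ i' → G.Adj (γ i) (γ i')) :
    (∀ i : Fin k,
      IsShortestDirPath (DVertE k N G) (DVertV.a i) (DVertV.b i) (canonVertV G i (γ i))) ∧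
    (∀ j : Fin k,
      IsShortestDirPath (DVertE k N G) (DVertV.c j) (DVertV.d j) (canonVertH k N j (γ j))) ∧
    (∀ i i' : Fin k, i ≠ i' →
      VertDisj (canonVertV G i (γ i)) (canonVertV G i' (γ i'))) ∧
    (∀ j j' : Fin k, j ≠ j' →
      VertDisj (canonVertH k N j (γ j)) (canonVertH k N j' (γ j'))) ∧
    (∀ i j : Fin k, VertDisj (canonVertV G i (γ i)) (canonVertH k N j (γ j))) :=
  DVert_completeness_general N k G γ hadj
end
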